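/- arXiv:0810.2247 — 7 statements merged into one kernel-verified Lean document; each statement's English description precedes it below -/
import Mathlib

section
/- For every integer n ≥ 1, the polynomial W_{n+1}(q)·W_{n-1}(q) − W_n(q)^2 has nonnegative coefficients. In other words, the sequence of polynomials {W_n(q)}_{n≥0} is q-log-convex. -/
/-- `W n = ∑_{k=0}^n C(n,k)^2 q^k` as a polynomial in `ℤ[q]`. -/
noncomputable def W (n : ℕ) : Polynomial ℤ :=
  ∑ k ∈ Finset.range (n + 1), Polynomial.C ((Nat.choose n k : ℤ) ^ 2) * Polynomial.X ^ k

namespace WLogConvex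

open Polynomial

/-- `M n = ∑_k C(n,k) C(n,k+1) q^k`  (`n` times the Narayana polynomial). -/
noncomputable def M (n : ℕ) : Polynomial ℤ :=
  ∑ k ∈ Finset.range (n + 1),
    Polynomial.C ((Nat.choose n k : ℤ) * (Nat.choose n (k+1) : ℤ)) * Polynomial.X ^ k

lemma W_coeff (n j : ℕ) : (W n).coeff j = ((n.choose j : ℤ))^2 := by
  unfold W
  rw [finset_sum_coeff]
  simp only [coeff_C_mul, coeff_X_pow, mul_ite, mul_one, mul_zero]
  rw [Finset.sum_ite_eq (Finset.range (n+1)) j]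
  split_ifs with h
  · rfl
  · have hj : n < j := by simp [Finset.mem_range] at h; omega
    rw [Nat.choose_eq_zero_of_lt hj]; norm_num

lemma M_coeff (n j : ℕ) : (M n).coeff j = (n.choose j : ℤ) * (n.choose (j+1) : ℤ) := by
  unfold M
  rw [finset_sum_coeff]
  simp only [coeff_C_mul, coeff_X_pow, mul_ite, mul_one, mul_zero]
  rw [Finset.sum_ite_eq (Finset.range (n+1)) j]
  split_ifs with h
  · rfl
  · have hj : n < j := by simp [Finset.mem_range] at h; omega
    rw [Nat.choose_eq_zero_of_lt hj]; norm_num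

/-- The key binomial identity:
`m·C(m,k+1)² = C(m,k+1)(C(m,k)+C(m,k+2)) + (m+2)·C(m,k)·C(m,k+2)`. -/
lemma dagger (m k : ℕ) :
    (m : ℤ) * (m.choose (k+1) : ℤ)^2 =
      (m.choose (k+1) : ℤ) * ((m.choose k : ℤ) + (m.choose (k+2) : ℤ))
        + ((m : ℤ) + 2) * (m.choose k : ℤ) * (m.choose (k+2) : ℤ) := by
  rcases le_or_gt (k+1) m with h | h
  · obtain ⟨d, rfl⟩ : ∃ d, m = k + 1 + d := ⟨m - (k+1), by omega⟩
    have h1 : ((k+1+d).choose (k+1) : ℤ) * (k+1) = ((k+1+d).choose k : ℤ) * (d+1) := by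
      have := Nat.choose_succ_right_eq (k+1+d) k
      have hn : (k+1+d) - k = d+1 := by omega
      rw [hn] at this
      exact_mod_cast congrArg (fun x : ℕ => (x : ℤ)) this
    have h2 : ((k+1+d).choose (k+2) : ℤ) * (k+2) = ((k+1+d).choose (k+1) : ℤ) * d := by
      have := Nat.choose_succ_right_eq (k+1+d) (k+1)
      have hn : (k+1+d) - (k+1) = d := by omega
      rw [hn] at this
      exact_mod_cast congrArg (fun x : ℕ => (x : ℤ)) this
    set a : ℤ := ((k+1+d).choose k : ℤ)
    set b : ℤ := ((k+1+d).choose (k+1) : ℤ)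
    set c : ℤ := ((k+1+d).choose (k+2) : ℤ)
    have key : ((k+1+d : ℕ) : ℤ) * b^2 * ((d+1)*(k+2))
        = (b * (a + c) + (((k+1+d : ℕ) : ℤ) + 2) * a * c) * ((d+1)*(k+2)) := by
      push_cast
      linear_combination (b*((k:ℤ)+2) + ((k:ℤ)+3+d)*b*d + ((k:ℤ)+3+d)*(c*((k:ℤ)+2) - b*d)) * h1
        - (b*((d:ℤ)+1) + ((k:ℤ)+3+d)*b*((k:ℤ)+1)) * h2
    have hne : ((d:ℤ)+1)*((k:ℤ)+2) ≠ 0 := by positivity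
    exact mul_right_cancel₀ hne key
  · have hz1 : m.choose (k+1) = 0 := Nat.choose_eq_zero_of_lt h
    have hz2 : m.choose (k+2) = 0 := Nat.choose_eq_zero_of_lt (by omega)
    rw [hz1, hz2]; push_cast; ring

/-! ### Nonnegative-coefficient predicate -/

def IsNN (p : Polynomial ℤ) : Prop := ∀ i, 0 ≤ p.coeff i

lemma IsNN.add {p q : Polynomial ℤ} (hp : IsNN p) (hq : IsNN q) : IsNN (p + q) := by
  intro i; rw [coeff_add]; exact add_nonneg (hp i) (hq i)

lemma IsNN.mul {p q : Polynomial ℤ} (hp : IsNN p) (hq : IsNN q) : IsNN (p * q) := by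
  intro i; rw [coeff_mul]
  exact Finset.sum_nonneg fun x _ => mul_nonneg (hp x.1) (hq x.2)

lemma IsNN_C {a : ℤ} (ha : 0 ≤ a) : IsNN (C a) := by
  intro i; rw [coeff_C]; split_ifs <;> simp [ha]

lemma IsNN_X_pow (k : ℕ) : IsNN ((X : Polynomial ℤ)^k) := by
  intro i; rw [coeff_X_pow]; split_ifs <;> norm_num

lemma IsNN_one : IsNN (1 : Polynomial ℤ) := by
  intro i; rw [coeff_one]; split_ifs <;> norm_num

lemma IsNN_W (n : ℕ) : IsNN (W n) := by
  intro i; rw [W_coeff]; positivity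

lemma IsNN_M (n : ℕ) : IsNN (M n) := by
  intro i; rw [M_coeff]; positivity

lemma IsNN.of_C_mul {a : ℤ} {p : Polynomial ℤ} (ha : 0 < a) (h : IsNN (C a * p)) : IsNN p := by
  intro i
  have := h i
  rw [coeff_C_mul] at this
  exact nonneg_of_mul_nonneg_right this ha

/-! ### The three linear identities -/

/-- three-term (Legendre-type) recurrence for `W`, in additive form. -/
lemma idF (m : ℕ) :
    C ((m:ℤ)+2) * W (m+2) + C ((m:ℤ)+1) * W m + C ((m:ℤ)+1) * (W m * X^2)
      = C (2*(m:ℤ)+3) * (W (m+1) + W (m+1) * X^1) + C (2*(m:ℤ)+2) * (W m * X^1) := by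
  apply Polynomial.ext
  intro j
  simp only [coeff_add, coeff_C_mul, mul_add, coeff_mul_X_pow']
  match j with
  | 0 => norm_num [W_coeff]; try ring
  | 1 =>
    norm_num [W_coeff, Nat.choose_one_right]
    ring
  | (j+2) =>
    have e1 : j + 2 - 2 = j := by omega
    have e2 : j + 2 - 1 = j + 1 := by omega
    norm_num [W_coeff, e1, e2]
    have p1 : ((m+1).choose (j+1)) = m.choose j + m.choose (j+1) := Nat.choose_succ_succ m j
    have p2 : ((m+1).choose (j+2)) = m.choose (j+1) + m.choose (j+2) := Nat.choose_succ_succ m (j+1)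
    have p3 : ((m+2).choose (j+2)) = (m+1).choose (j+1) + (m+1).choose (j+2) :=
      Nat.choose_succ_succ (m+1) (j+1)
    rw [p3, p1, p2]
    push_cast
    linear_combination (-2 : ℤ) * dagger m j

/-- `(m+2)((1+X) W_{m+2} - (1-X)^2 W_{m+1}) = 2(m+3) X M_{m+2}`, additive form. -/
lemma idC (m : ℕ) :
    C ((m:ℤ)+2) * (W (m+2) + W (m+2) * X^1) + C (2*(m:ℤ)+4) * (W (m+1) * X^1)
      = C ((m:ℤ)+2) * W (m+1) + C ((m:ℤ)+2) * (W (m+1) * X^2)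
          + C (2*(m:ℤ)+6) * (M (m+2) * X^1) := by
  apply Polynomial.ext
  intro j
  simp only [coeff_add, coeff_C_mul, mul_add, coeff_mul_X_pow']
  match j with
  | 0 => norm_num [W_coeff, M_coeff]; try ring
  | 1 =>
    norm_num [W_coeff, M_coeff, Nat.choose_one_right]
    ring
  | (j+2) =>
    have e1 : j + 2 - 2 = j := by omega
    have e2 : j + 2 - 1 = j + 1 := by omega
    norm_num [W_coeff, M_coeff, e1, e2]
    have p1 : ((m+2).choose (j+1)) = (m+1).choose j + (m+1).choose (j+1) :=
      Nat.choose_succ_succ (m+1) j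
    have p2 : ((m+2).choose (j+2)) = (m+1).choose (j+1) + (m+1).choose (j+2) :=
      Nat.choose_succ_succ (m+1) (j+1)
    rw [p1, p2]
    have hd := dagger (m+1) j
    push_cast at hd ⊢
    linear_combination (2 : ℤ) * hd

/-- The recurrence for `Z_n := W_{n+1} W_{n-1} - W_n^2`:
`(m+2)² Z_{m+2} = (m+1)(m+2)(1+X²) Z_{m+1} + 2X (M_{m+2} W_{m+1} - (m+1)(m+2) Z_{m+1})`. -/
lemma idE (m : ℕ) :
    C (((m:ℤ)+2)^2) * (W (m+3) * W (m+1) - W (m+2)^2)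
      = C (((m:ℤ)+1)*((m:ℤ)+2)) *
          ((W (m+2) * W m - W (m+1)^2) + (W (m+2) * W m - W (m+1)^2) * X^2)
        + C 2 * ((M (m+2) * W (m+1)
            - C (((m:ℤ)+1)*((m:ℤ)+2)) * (W (m+2) * W m - W (m+1)^2)) * X^1) := by
  have hne : (C ((m:ℤ)+3)) ≠ 0 := by
    rw [Ne, Polynomial.C_eq_zero]
    intro h; omega
  apply mul_left_cancel₀ hne
  have f1 := idF (m+1)
  have f2 := idF m
  have c1 := idC m
  simp only [map_add, map_mul, map_pow, map_ofNat, Polynomial.C_eq_natCast, map_one]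
    at f1 f2 c1 ⊢
  push_cast at f1 f2 c1 ⊢
  linear_combination (((m:Polynomial ℤ)+2)^2 * W (m+1)) * f1
    - (((m:Polynomial ℤ)+2)*((m:Polynomial ℤ)+3) * W (m+2)) * f2
    + (W (m+1)) * c1

/-! ### The two coefficientwise inequalities -/

/-- `W (m+1) - (1+X) W m` has nonnegative coefficients. -/
lemma lemA (m : ℕ) : IsNN (W (m+1) - (W m + W m * X^1)) := by
  intro i
  simp only [coeff_sub, coeff_add, coeff_mul_X_pow']
  match i with
  | 0 => norm_num [W_coeff]
  | (j+1) =>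
    have e2 : j + 1 - 1 = j := by omega
    norm_num [W_coeff, e2]
    have p1 : ((m+1).choose (j+1)) = m.choose j + m.choose (j+1) := Nat.choose_succ_succ m j
    rw [p1]
    push_cast
    nlinarith [mul_nonneg (Int.ofNat_nonneg (m.choose j)) (Int.ofNat_nonneg (m.choose (j+1)))]

/-- `(m+1) M (m+2) - (m+2)(1+X) M (m+1)` has nonnegative coefficients. -/
lemma lemB (m : ℕ) :
    IsNN (C ((m:ℤ)+1) * M (m+2) - C ((m:ℤ)+2) * (M (m+1) + M (m+1) * X^1)) := by
  intro i
  simp only [coeff_sub, coeff_add, coeff_C_mul, mul_add, coeff_mul_X_pow']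
  match i with
  | 0 => norm_num [M_coeff, Nat.choose_one_right]; push_cast; ring_nf; omega
  | (j+1) =>
    have e2 : j + 1 - 1 = j := by omega
    norm_num [M_coeff, e2]
    have p1 : ((m+2).choose (j+1)) = (m+1).choose j + (m+1).choose (j+1) :=
      Nat.choose_succ_succ (m+1) j
    have p2 : ((m+2).choose (j+2)) = (m+1).choose (j+1) + (m+1).choose (j+2) :=
      Nat.choose_succ_succ (m+1) (j+1)
    rw [p1, p2]
    have hd := dagger (m+1) j
    push_cast at hd ⊢
    have hac : (0:ℤ) ≤ ((m+1).choose j : ℤ) * ((m+1).choose (j+2) : ℤ) := by positivity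
    nlinarith [hac]

/-! ### Base case computations -/

lemma base1 : W 2 * W 0 - W 1^2 = C 2 * X^1 := by
  simp [W, Finset.sum_range_succ, Nat.choose]
  ring

lemma base2 : M 2 * W 1 - C 2 * (W 2 * W 0 - W 1^2) = C 2 + C 2 * X^2 := by
  simp [W, M, Finset.sum_range_succ, Nat.choose]
  ring

/-! ### The main induction -/

lemma main (m : ℕ) :
    IsNN (W (m+2) * W m - W (m+1)^2) ∧
    IsNN (M (m+2) * W (m+1) - C (((m:ℤ)+1)*((m:ℤ)+2)) * (W (m+2) * W m - W (m+1)^2)) := by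
  induction m with
  | zero =>
    constructor
    · rw [base1]
      exact (IsNN_C (by norm_num)).mul (IsNN_X_pow 1)
    · have hc : ((((0:ℕ):ℤ))+1)*((((0:ℕ):ℤ))+2) = 2 := by norm_num
      rw [hc, base2]
      exact (IsNN_C (by norm_num)).add ((IsNN_C (by norm_num)).mul (IsNN_X_pow 2))
  | succ m ih =>
    obtain ⟨h1, h2⟩ := ih
    have e := idE m
    have hc2 : (0:ℤ) ≤ ((m:ℤ)+1)*((m:ℤ)+2) := by positivity
    -- Part 1 : IsNN Z_{m+1}
    have k1 : IsNN (W (m+3) * W (m+1) - W (m+2)^2) := by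
      apply IsNN.of_C_mul (show (0:ℤ) < ((m:ℤ)+2)^2 by positivity)
      rw [e]
      exact ((IsNN_C hc2).mul (h1.add (h1.mul (IsNN_X_pow 2)))).add
        ((IsNN_C (by norm_num)).mul (h2.mul (IsNN_X_pow 1)))
    -- Part 2
    have lb := lemB (m+1)
    have hb1 : ((((m+1:ℕ)):ℤ)+1) = ((m:ℤ)+2) := by push_cast; ring
    have hb2 : ((((m+1:ℕ)):ℤ)+2) = ((m:ℤ)+3) := by push_cast; ring
    rw [hb1, hb2] at lb
    have key : C ((m:ℤ)+2) *
        (M (m+3) * W (m+2) - C (((m:ℤ)+2)*((m:ℤ)+3)) * (W (m+3) * W (m+1) - W (m+2)^2))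
      = (C ((m:ℤ)+2) * M (m+3)) * (W (m+2) - (W (m+1) + W (m+1) * X^1))
        + (C ((m:ℤ)+2) * M (m+3) - C ((m:ℤ)+3) * (M (m+2) + M (m+2) * X^1))
            * (W (m+1) + W (m+1) * X^1)
        + C ((m:ℤ)+3) * ((1 + X^2) *
              (M (m+2) * W (m+1)
                - C (((m:ℤ)+1)*((m:ℤ)+2)) * (W (m+2) * W m - W (m+1)^2))
            + C (2*(((m:ℤ)+1)*((m:ℤ)+2))) * ((W (m+2) * W m - W (m+1)^2) * X^1)) := by
      simp only [map_add, map_mul, map_pow, map_ofNat, Polynomial.C_eq_natCast, map_one]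
        at e ⊢
      push_cast at e ⊢
      linear_combination (-((m:Polynomial ℤ)+3)) * e
    have k2 : IsNN (M (m+3) * W (m+2)
        - C (((m:ℤ)+2)*((m:ℤ)+3)) * (W (m+3) * W (m+1) - W (m+2)^2)) := by
      apply IsNN.of_C_mul (show (0:ℤ) < (m:ℤ)+2 by positivity)
      rw [key]
      refine (IsNN.add (IsNN.add ?_ ?_) ?_)
      · exact ((IsNN_C (by positivity)).mul (IsNN_M (m+3))).mul (lemA (m+1))
      · exact lb.mul ((IsNN_W (m+1)).add ((IsNN_W (m+1)).mul (IsNN_X_pow 1)))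
      · refine (IsNN_C (by positivity)).mul (IsNN.add ?_ ?_)
        · exact (IsNN_one.add (IsNN_X_pow 2)).mul h2
        · exact (IsNN_C (by positivity)).mul (h1.mul (IsNN_X_pow 1))
    constructor
    · show IsNN (W (m+1+2) * W (m+1) - W (m+1+1)^2)
      have : m+1+2 = m+3 := by omega
      rw [this]
      exact k1
    · have hb3 : ((((m+1:ℕ)):ℤ)+1)*((((m+1:ℕ)):ℤ)+2) = ((m:ℤ)+2)*((m:ℤ)+3) := by
        push_cast; ring
      show IsNN (M (m+1+2) * W (m+1+1)
        - C (((((m+1:ℕ)):ℤ)+1)*((((m+1:ℕ)):ℤ)+2)) * (W (m+1+2) * W (m+1) - W (m+1+1)^2))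
      have e1 : m+1+2 = m+3 := by omega
      have e2 : m+1+1 = m+2 := by omega
      rw [e1, e2, hb3]
      exact k2

end WLogConvex

/-- The sequence `{W n}_{n ≥ 0}` is `q`-log-convex: for every `n ≥ 1`, the polynomial
`W (n+1) * W (n-1) - (W n)^2` has nonnegative coefficients. -/
theorem W_q_log_convex (n : ℕ) (hn : 1 ≤ n) (i : ℕ) :
    0 ≤ (W (n + 1) * W (n - 1) - W n ^ 2).coeff i := by
  obtain ⟨m, rfl⟩ : ∃ m, n = m + 1 := ⟨n - 1, by omega⟩
  have e1 : m + 1 + 1 = m + 2 := by omega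
  have e2 : m + 1 - 1 = m := by omega
  rw [e1, e2]
  exact (WLogConvex.main m).1 i
end

section
/- For all integers n ≥ 1 and r ≥ 0, ∑_{k=0}^r C(n+1,k)^2 · C(n−1,r−k)^2 ≥ ∑_{k=0}^r C(n,k)^2 · C(n,r−k)^2. -/
set_option maxHeartbeats 1000000

open Polynomial

noncomputable def gP : ℕ → ℤ → Polynomial ℤ
  | 0, x => if x = 0 then 1 else 0
  | (s+1), x => X * gP s x + (1 + X) * gP s (x-1) + gP s (x-2)

noncomputable def mP (s : ℕ) (d a : ℤ) : Polynomial ℤ :=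
  gP s a * gP s (a + 1 - d) - gP s (a + 1) * gP s (a - d)

noncomputable def DP (s : ℕ) (d a : ℤ) : Polynomial ℤ := X * mP s d a - mP s d (a - 1)

def Pos (p : Polynomial ℤ) : Prop := ∀ i, 0 ≤ p.coeff i

lemma gP_succ (s : ℕ) (x : ℤ) :
    gP (s+1) x = X * gP s x + (1 + X) * gP s (x-1) + gP s (x-2) := rfl

lemma gP_zero (x : ℤ) : gP 0 x = if x = 0 then 1 else 0 := rfl

lemma Pos.add {p q : Polynomial ℤ} (hp : Pos p) (hq : Pos q) : Pos (p + q) := by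
  intro i; rw [coeff_add]; exact add_nonneg (hp i) (hq i)

lemma Pos.mul {p q : Polynomial ℤ} (hp : Pos p) (hq : Pos q) : Pos (p * q) := by
  intro i
  rw [coeff_mul]
  exact Finset.sum_nonneg fun x _ => mul_nonneg (hp x.1) (hq x.2)

lemma Pos_X : Pos (X : Polynomial ℤ) := by
  intro i
  rw [coeff_X]
  split_ifs <;> norm_num

lemma Pos_one : Pos (1 : Polynomial ℤ) := by
  intro i
  rw [coeff_one]
  split_ifs <;> norm_num

lemma Pos_zeropoly : Pos (0 : Polynomial ℤ) := fun i => by simp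

lemma Pos_onePlusX : Pos (1 + X : Polynomial ℤ) := Pos_one.add Pos_X

lemma Pos_oneXX : Pos (1 + X + X*X : Polynomial ℤ) := Pos_onePlusX.add (Pos_X.mul Pos_X)

lemma Pos_oneX2 : Pos (1 + X*X : Polynomial ℤ) := Pos_one.add (Pos_X.mul Pos_X)

lemma gP_sym : ∀ (s : ℕ) (x : ℤ) (u v : ℕ), (u:ℤ) + x = v + s →
    X ^ u * gP s (2*(s:ℤ) - x) = X ^ v * gP s x := by
  intro s
  induction s with
  | zero =>
    intro x u v h
    simp only [Nat.cast_zero, mul_zero, zero_sub] at *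
    by_cases hx : x = 0
    · subst hx
      have : u = v := by omega
      subst this; simp
    · have h1 : gP 0 (-x) = 0 := by simp [gP]; omega
      have h2 : gP 0 x = 0 := by simp [gP, hx]
      rw [h1, h2, mul_zero, mul_zero]
  | succ s ih =>
    intro x u v h
    have ih1 : X ^ (u+1) * gP s (2*(s:ℤ) - (x-2)) = X ^ v * gP s (x-2) := by
      apply ih; push_cast at h ⊢; omega
    have ih2 : X ^ u * gP s (2*(s:ℤ) - (x-1)) = X ^ v * gP s (x-1) := by
      apply ih; push_cast at h ⊢; omega
    have ih3 : X ^ u * gP s (2*(s:ℤ) - x) = X ^ (v+1) * gP s x := by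
      apply ih; push_cast at h ⊢; omega
    rw [gP_succ, gP_succ]
    have e1 : (2*((s:ℤ)+1) - x - 1) = 2*(s:ℤ) - (x-1) := by ring
    have e2 : (2*((s:ℤ)+1) - x - 2) = 2*(s:ℤ) - x := by ring
    have e3 : (2*((s:ℤ)+1) - x) = 2*(s:ℤ) - (x-2) := by ring
    push_cast
    rw [e1, e2, e3]
    linear_combination ih1 + (1 + X) * ih2 + ih3

lemma pow_shift {P Q : Polynomial ℤ} {a b u v : ℕ} (h : X ^ a * P = X ^ b * Q)
    (hrel : b + u = a + v) : X ^ u * P = X ^ v * Q := by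
  apply mul_left_cancel₀ (pow_ne_zero a (X_ne_zero (R := ℤ)))
  calc X ^ a * (X ^ u * P) = X ^ u * (X ^ a * P) := by ring
    _ = X ^ u * (X ^ b * Q) := by rw [h]
    _ = X ^ (u + b) * Q := by rw [pow_add]; ring
    _ = X ^ (a + v) * Q := by rw [show u + b = a + v by omega]
    _ = X ^ a * (X ^ v * Q) := by rw [pow_add]; ring

lemma prod_sym (s : ℕ) (x y : ℤ) (u u' : ℕ) (h : (u':ℤ) + x + y = u + 2*s) :
    X ^ u' * (gP s (2*(s:ℤ) - x) * gP s (2*(s:ℤ) - y)) = X ^ u * (gP s x * gP s y) := by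
  have hA := gP_sym s x (s - x).toNat (x - s).toNat (by omega)
  have hB := gP_sym s y (s - y).toNat (y - s).toNat (by omega)
  have key : X ^ ((s - x).toNat + (s - y).toNat) * (gP s (2*(s:ℤ) - x) * gP s (2*(s:ℤ) - y))
      = X ^ ((x - (s:ℤ)).toNat + (y - s).toNat) * (gP s x * gP s y) := by
    rw [pow_add, pow_add]
    linear_combination (X ^ ((s:ℤ) - y).toNat * gP s (2*(s:ℤ) - y)) * hA +
      (X ^ ((x - (s:ℤ)).toNat) * gP s x) * hB
  exact pow_shift key (by omega)

lemma m_sym (s : ℕ) (d a : ℤ) (u u' : ℕ) (h : (u':ℤ) + (2*a+1-d) = u + 2*(s:ℤ)) :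
    X ^ u' * mP s d (2*(s:ℤ) - a - 1 + d) = X ^ u * mP s d a := by
  unfold mP
  rw [show (2*(s:ℤ) - a - 1 + d) = 2*(s:ℤ) - (a+1-d) by ring,
      show (2*(s:ℤ) - (a+1-d) + 1 - d) = 2*(s:ℤ) - a by ring,
      show (2*(s:ℤ) - (a+1-d) + 1) = 2*(s:ℤ) - (a-d) by ring,
      show (2*(s:ℤ) - (a+1-d) - d) = 2*(s:ℤ) - (a+1) by ring]
  have h1 := prod_sym s (a+1-d) a u u' (by omega)
  have h2 := prod_sym s (a-d) (a+1) u u' (by omega)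
  linear_combination h1 - h2

lemma D_reflect1 (s : ℕ) (d a : ℤ) (h : 2*a = 2*(s:ℤ) + d + 1) :
    X * DP s d a = - DP s d (a-1) := by
  have hm1 : X ^ 0 * mP s d (2*(s:ℤ) - a - 1 + d) = X ^ 2 * mP s d a := m_sym s d a 2 0 (by omega)
  rw [show (2*(s:ℤ) - a - 1 + d) = a - 2 by omega] at hm1
  unfold DP
  rw [show (a - 1 - 1 : ℤ) = a - 2 by ring]
  linear_combination - hm1

lemma D_reflect2 (s : ℕ) (d a : ℤ) (h : 2*a = 2*(s:ℤ) + d + 2) :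
    X * X * DP s d a = - DP s d (a-2) := by
  have hm1 : X ^ 0 * mP s d (2*(s:ℤ) - a - 1 + d) = X ^ 3 * mP s d a := m_sym s d a 3 0 (by omega)
  have hm2 : X ^ 0 * mP s d (2*(s:ℤ) - (a-1) - 1 + d) = X ^ 1 * mP s d (a-1) :=
    m_sym s d (a-1) 1 0 (by omega)
  rw [show (2*(s:ℤ) - a - 1 + d) = a - 3 by omega] at hm1
  rw [show (2*(s:ℤ) - (a-1) - 1 + d) = a - 2 by omega] at hm2
  unfold DP
  rw [show (a - 2 - 1 : ℤ) = a - 3 by ring]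
  linear_combination - hm1 + X * hm2

lemma DP_d0 (s : ℕ) (a : ℤ) : DP s 0 a = 0 := by
  unfold DP mP
  rw [show (a + 1 - 0 : ℤ) = a + 1 by ring, show (a - 0 : ℤ) = a by ring,
      show (a - 1 + 1 - 0 : ℤ) = a by ring, show (a - 1 + 1 : ℤ) = a by ring,
      show (a - 1 - 0 : ℤ) = a - 1 by ring]
  ring

lemma DP_dneg (s : ℕ) (a : ℤ) : DP s (-1) a = - DP s 1 (a+1) := by
  unfold DP mP
  rw [show (a + 1 - (-1) : ℤ) = a + 2 by ring, show (a - (-1) : ℤ) = a + 1 by ring,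
      show (a - 1 + 1 - (-1) : ℤ) = a + 1 by ring, show (a - 1 + 1 : ℤ) = a by ring,
      show (a - 1 - (-1) : ℤ) = a by ring,
      show (a + 1 + 1 - 1 : ℤ) = a + 1 by ring, show (a + 1 + 1 : ℤ) = a + 2 by ring]
  rw [show (a + 1 - 1 : ℤ) = a by ring]
  ring

lemma mP_step (s : ℕ) (d a : ℤ) :
    mP (s+1) d a =
      X*X * mP s d a + X*(1+X) * mP s (d+1) a + X * mP s (d+2) a
      + (1+X)*X * mP s (d-1) (a-1) + (1+X)*(1+X) * mP s d (a-1) + (1+X) * mP s (d+1) (a-1)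
      + X * mP s (d-2) (a-2) + (1+X) * mP s (d-1) (a-2) + mP s d (a-2) := by
  unfold mP
  rw [gP_succ s a, gP_succ s (a+1-d), gP_succ s (a+1), gP_succ s (a-d)]
  simp only [show (a+1-d-1 : ℤ) = a-d from by ring,
    show (a+1-d-2 : ℤ) = a-d-1 from by ring,
    show (a+1-1 : ℤ) = a from by ring,
    show (a+1-2 : ℤ) = a-1 from by ring,
    show (a+1-(d+1) : ℤ) = a-d from by ring,
    show (a-(d+1) : ℤ) = a-d-1 from by ring,
    show (a+1-(d+2) : ℤ) = a-d-1 from by ring,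
    show (a-(d+2) : ℤ) = a-d-2 from by ring,
    show (a-1+1-(d-1) : ℤ) = a+1-d from by ring,
    show (a-1+1 : ℤ) = a from by ring,
    show (a-1-(d-1) : ℤ) = a-d from by ring,
    show (a-1+1-d : ℤ) = a-d from by ring,
    show (a-1-d : ℤ) = a-d-1 from by ring,
    show (a-1+1-(d+1) : ℤ) = a-d-1 from by ring,
    show (a-1-(d+1) : ℤ) = a-d-2 from by ring,
    show (a-2+1-(d-2) : ℤ) = a+1-d from by ring,
    show (a-2+1 : ℤ) = a-1 from by ring,
    show (a-2-(d-2) : ℤ) = a-d from by ring,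
    show (a-2+1-(d-1) : ℤ) = a-d from by ring,
    show (a-2-(d-1) : ℤ) = a-d-1 from by ring,
    show (a-2+1-d : ℤ) = a-d-1 from by ring,
    show (a-2-d : ℤ) = a-d-2 from by ring]
  ring

lemma DP_step (s : ℕ) (d a : ℤ) :
    DP (s+1) d a =
      X*X * DP s d a + X*(1+X) * DP s (d+1) a + X * DP s (d+2) a
      + (1+X)*X * DP s (d-1) (a-1) + (1+X)*(1+X) * DP s d (a-1) + (1+X) * DP s (d+1) (a-1)
      + X * DP s (d-2) (a-2) + (1+X) * DP s (d-1) (a-2) + DP s d (a-2) := by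
  unfold DP
  rw [mP_step s d a, mP_step s d (a-1)]
  simp only [show (a-1-1 : ℤ) = a-2 from by ring,
    show (a-1-2 : ℤ) = a-3 from by ring,
    show (a-2-1 : ℤ) = a-3 from by ring]
  ring

def ch (s : ℕ) (j : ℤ) : ℤ := if 0 ≤ j then (s.choose j.toNat : ℤ) else 0

lemma ch_pascal (s : ℕ) (j : ℤ) : ch (s+1) j = ch s j + ch s (j-1) := by
  unfold ch
  by_cases h0 : 0 ≤ j
  · by_cases h1 : j = 0
    · subst h1
      norm_num
    · have hj : 0 ≤ j - 1 := by omega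
      rw [if_pos h0, if_pos h0, if_pos hj]
      have ht : j.toNat = (j-1).toNat + 1 := by omega
      rw [ht, Nat.choose_succ_succ]
      push_cast; ring
  · rw [if_neg h0, if_neg h0, if_neg (by omega)]; ring

lemma ch_nat (s t : ℕ) : ch s (t : ℤ) = (s.choose t : ℤ) := by
  unfold ch
  rw [if_pos (by positivity), Int.toNat_natCast]

lemma gP_coeff : ∀ (s : ℕ) (x : ℤ) (t : ℕ),
    (gP s x).coeff t = (s.choose t : ℤ) * ch s (x - s + t) := by
  intro s
  induction s with
  | zero =>
    intro x t
    rw [gP_zero]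
    by_cases hx : x = 0
    · subst hx
      rw [if_pos rfl, coeff_one]
      rcases t with _ | t
      · norm_num [ch]
      · simp [Nat.choose_eq_zero_of_lt (Nat.succ_pos t)]
    · rw [if_neg hx, coeff_zero]
      rcases t with _ | t
      · rw [show (x - ((0:ℕ):ℤ) + ((0:ℕ):ℤ)) = x by push_cast; ring]
        unfold ch
        split_ifs with h
        · rw [Nat.choose_eq_zero_of_lt (show 0 < x.toNat by omega)]
          norm_num
        · norm_num
      · simp [Nat.choose_eq_zero_of_lt (Nat.succ_pos t)]
  | succ s ih =>
    intro x t
    rw [gP_succ, coeff_add, coeff_add]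
    have h1X : ((1+X) * gP s (x-1)).coeff t = (gP s (x-1)).coeff t + (X * gP s (x-1)).coeff t := by
      rw [add_mul, one_mul, coeff_add]
    rcases t with _ | t
    · rw [h1X, mul_coeff_zero, coeff_X_zero, zero_mul, mul_coeff_zero, coeff_X_zero, zero_mul,
        ih (x-1) 0, ih (x-2) 0]
      rw [show (x - 1 - (s:ℤ) + ((0:ℕ):ℤ)) = x - (s:ℤ) + ((0:ℕ):ℤ) - 1 by push_cast; ring,
          show (x - 2 - (s:ℤ) + ((0:ℕ):ℤ)) = x - (s:ℤ) + ((0:ℕ):ℤ) - 1 - 1 by push_cast; ring,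
          show (x - ((s+1:ℕ):ℤ) + ((0:ℕ):ℤ)) = x - (s:ℤ) + ((0:ℕ):ℤ) - 1 by push_cast; ring,
          ch_pascal]
      simp only [Nat.choose_zero_right]
      push_cast
      ring
    · rw [h1X, coeff_X_mul, coeff_X_mul,
        ih x t, ih (x-1) (t+1), ih (x-1) t, ih (x-2) (t+1)]
      rw [show (x - 1 - (s:ℤ) + ((t+1:ℕ):ℤ)) = x - (s:ℤ) + ((t:ℕ):ℤ) by push_cast; ring,
          show (x - 1 - (s:ℤ) + ((t:ℕ):ℤ)) = x - (s:ℤ) + ((t:ℕ):ℤ) - 1 by push_cast; ring,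
          show (x - 2 - (s:ℤ) + ((t+1:ℕ):ℤ)) = x - (s:ℤ) + ((t:ℕ):ℤ) - 1 by push_cast; ring,
          show (x - ((s+1:ℕ):ℤ) + ((t+1:ℕ):ℤ)) = x - (s:ℤ) + ((t:ℕ):ℤ) by push_cast; ring,
          ch_pascal, Nat.choose_succ_succ (s) (t)]
      push_cast
      ring

lemma central_coeff (s : ℕ) (x : ℤ) (hx : x = (s:ℤ)) (t : ℕ) :
    (gP s x).coeff t = (s.choose t : ℤ) ^ 2 := by
  subst hx
  rw [gP_coeff, show ((s:ℤ) - s + t) = ((t:ℕ):ℤ) by push_cast; ring, ch_nat]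
  ring

lemma refl_inst1 (k : ℕ) : gP (k+1) (k:ℤ) = X * gP (k+1) ((k:ℤ)+2) := by
  have h := gP_sym (k+1) ((k:ℤ)+2) 0 1 (by push_cast; ring)
  rw [show (2*((k+1:ℕ):ℤ) - ((k:ℤ)+2)) = (k:ℤ) by push_cast; ring] at h
  rw [pow_zero, one_mul, pow_one] at h
  exact h

lemma refl_inst2 (k : ℕ) : gP k ((k:ℤ)-1) = X * gP k ((k:ℤ)+1) := by
  have h := gP_sym k ((k:ℤ)+1) 0 1 (by push_cast; ring)
  rw [show (2*((k:ℕ):ℤ) - ((k:ℤ)+1)) = (k:ℤ)-1 by push_cast; ring] at h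
  rw [pow_zero, one_mul, pow_one] at h
  exact h

lemma refl_inst3 (k : ℕ) : gP k ((k:ℤ)-2) = X * (X * gP k ((k:ℤ)+2)) := by
  have h := gP_sym k ((k:ℤ)+2) 0 2 (by push_cast; ring)
  rw [show (2*((k:ℕ):ℤ) - ((k:ℤ)+2)) = (k:ℤ)-2 by push_cast; ring] at h
  rw [pow_zero, one_mul] at h
  rw [h]; ring

lemma final_id (k : ℕ) :
    gP (k+2) ((k:ℤ)+2) * gP k (k:ℤ) - gP (k+1) ((k:ℤ)+1) * gP (k+1) ((k:ℤ)+1)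
      = DP k 1 (k:ℤ) + DP k 1 (k:ℤ) := by
  have r1 : gP (k+2) ((k:ℤ)+2)
      = X * gP (k+1) ((k:ℤ)+2) + (1+X) * gP (k+1) ((k:ℤ)+1) + gP (k+1) (k:ℤ) := by
    rw [gP_succ]
    rw [show ((k:ℤ)+2-1) = (k:ℤ)+1 by ring, show ((k:ℤ)+2-2) = (k:ℤ) by ring]
  have r2 : gP (k+1) ((k:ℤ)+2)
      = X * gP k ((k:ℤ)+2) + (1+X) * gP k ((k:ℤ)+1) + gP k (k:ℤ) := by
    rw [gP_succ]
    rw [show ((k:ℤ)+2-1) = (k:ℤ)+1 by ring, show ((k:ℤ)+2-2) = (k:ℤ) by ring]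
  have r3 : gP (k+1) ((k:ℤ)+1)
      = X * gP k ((k:ℤ)+1) + (1+X) * gP k (k:ℤ) + gP k ((k:ℤ)-1) := by
    rw [gP_succ]
    rw [show ((k:ℤ)+1-1) = (k:ℤ) by ring, show ((k:ℤ)+1-2) = (k:ℤ)-1 by ring]
  have m1 : mP k 1 (k:ℤ) = gP k (k:ℤ) * gP k (k:ℤ) - gP k ((k:ℤ)+1) * gP k ((k:ℤ)-1) := by
    unfold mP
    rw [show ((k:ℤ)+1-1) = (k:ℤ) by ring]
  have m2 : mP k 1 ((k:ℤ)-1)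
      = gP k ((k:ℤ)-1) * gP k ((k:ℤ)-1) - gP k (k:ℤ) * gP k ((k:ℤ)-2) := by
    unfold mP
    rw [show ((k:ℤ)-1+1-1) = (k:ℤ)-1 by ring, show ((k:ℤ)-1+1) = (k:ℤ) by ring,
        show ((k:ℤ)-1-1) = (k:ℤ)-2 by ring]
  unfold DP
  rw [r1, refl_inst1 k, r2, r3, m1, m2, refl_inst2 k, refl_inst3 k]
  ring


attribute [irreducible] DP mP gP

theorem DP_pos : ∀ (s : ℕ) (d a : ℤ), 1 ≤ d → 2*a ≤ 2*(s:ℤ) + d → Pos (DP s d a) := by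
  intro s
  induction s with
  | zero =>
    intro d a hd ha
    norm_num at ha
    have hm1 : mP 0 d (a-1) = 0 := by
      rw [mP, gP_zero, gP_zero, gP_zero, gP_zero]
      split_ifs <;> (first | (exfalso; omega) | ring1)
    have hm0 : mP 0 d a = 0 ∨ mP 0 d a = 1 := by
      rw [mP, gP_zero, gP_zero, gP_zero, gP_zero]
      split_ifs <;> (first | (exfalso; omega) | (left; ring1) | (right; ring1))
    rw [DP, hm1, sub_zero]
    rcases hm0 with h | h
    · rw [h, mul_zero]; exact Pos_zeropoly
    · rw [h, mul_one]; exact Pos_X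
  | succ s ih =>
    intro d a hd ha
    rw [DP_step]
    push_cast at ha
    by_cases hd1 : d = 1
    · subst hd1
      rw [show ((1:ℤ)+1) = 2 by norm_num, show ((1:ℤ)+2) = 3 by norm_num,
          show ((1:ℤ)-1) = 0 by norm_num, show ((1:ℤ)-2) = -1 by norm_num]
      have hz1 : DP s 0 (a-1) = 0 := DP_d0 s (a-1)
      have hz2 : DP s 0 (a-2) = 0 := DP_d0 s (a-2)
      have hneg : DP s (-1) (a-2) = - DP s 1 (a-1) := by
        rw [DP_dneg, show (a-2+1 : ℤ) = a-1 by ring]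
      by_cases hc2 : 2*a = 2*(s:ℤ) + 1 + 2
      · have h00 := D_reflect2 s 1 a (by omega)
        have h01 := D_reflect1 s 2 a (by omega)
        have key : X*X * DP s 1 a + X*(1+X) * DP s 2 a + X * DP s 3 a
            + (1+X)*X * DP s 0 (a-1) + (1+X)*(1+X) * DP s 1 (a-1) + (1+X) * DP s 2 (a-1)
            + X * DP s (-1) (a-2) + (1+X) * DP s 0 (a-2) + DP s 1 (a-2)
            = X * DP s 3 a + (1+X+X*X) * DP s 1 (a-1) := by
          linear_combination h00 + (1+X) * h01 + (1+X)*X * hz1 + (1+X) * hz2 + X * hneg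
        rw [key]
        repeat' (first | apply Pos.add | apply Pos.mul)
        all_goals (first | exact Pos_X | exact Pos_one | (apply ih <;> omega))
      · by_cases hc1 : 2*a = 2*(s:ℤ) + 1 + 1
        · have h00 := D_reflect1 s 1 a (by omega)
          have key : X*X * DP s 1 a + X*(1+X) * DP s 2 a + X * DP s 3 a
              + (1+X)*X * DP s 0 (a-1) + (1+X)*(1+X) * DP s 1 (a-1) + (1+X) * DP s 2 (a-1)
              + X * DP s (-1) (a-2) + (1+X) * DP s 0 (a-2) + DP s 1 (a-2)
              = X*(1+X) * DP s 2 a + X * DP s 3 a + (1+X*X) * DP s 1 (a-1)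
                + (1+X) * DP s 2 (a-1) + DP s 1 (a-2) := by
            linear_combination X * h00 + (1+X)*X * hz1 + (1+X) * hz2 + X * hneg
          rw [key]
          repeat' (first | apply Pos.add | apply Pos.mul)
          all_goals (first | exact Pos_X | exact Pos_one | (apply ih <;> omega))
        · have key : X*X * DP s 1 a + X*(1+X) * DP s 2 a + X * DP s 3 a
              + (1+X)*X * DP s 0 (a-1) + (1+X)*(1+X) * DP s 1 (a-1) + (1+X) * DP s 2 (a-1)
              + X * DP s (-1) (a-2) + (1+X) * DP s 0 (a-2) + DP s 1 (a-2)
              = X*X * DP s 1 a + X*(1+X) * DP s 2 a + X * DP s 3 a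
                + (1+X+X*X) * DP s 1 (a-1) + (1+X) * DP s 2 (a-1) + DP s 1 (a-2) := by
            linear_combination (1+X)*X * hz1 + (1+X) * hz2 + X * hneg
          rw [key]
          repeat' (first | apply Pos.add | apply Pos.mul)
          all_goals (first | exact Pos_X | exact Pos_one | (apply ih <;> omega))
    · by_cases hd2 : d = 2
      · subst hd2
        rw [show ((2:ℤ)+1) = 3 by norm_num, show ((2:ℤ)+2) = 4 by norm_num,
            show ((2:ℤ)-1) = 1 by norm_num, show ((2:ℤ)-2) = 0 by norm_num]
        have hz : DP s 0 (a-2) = 0 := DP_d0 s (a-2)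
        by_cases hc2 : 2*a = 2*(s:ℤ) + 2 + 2
        · have h00 := D_reflect2 s 2 a (by omega)
          have h01 := D_reflect1 s 3 a (by omega)
          have h10 := D_reflect1 s 1 (a-1) (by omega)
          rw [show (a-1-1 : ℤ) = a-2 by ring] at h10
          have key : X*X * DP s 2 a + X*(1+X) * DP s 3 a + X * DP s 4 a
              + (1+X)*X * DP s 1 (a-1) + (1+X)*(1+X) * DP s 2 (a-1) + (1+X) * DP s 3 (a-1)
              + X * DP s 0 (a-2) + (1+X) * DP s 1 (a-2) + DP s 2 (a-2)
              = X * DP s 4 a + (1+X)*(1+X) * DP s 2 (a-1) := by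
            linear_combination h00 + (1+X) * h01 + (1+X) * h10 + X * hz
          rw [key]
          repeat' (first | apply Pos.add | apply Pos.mul)
          all_goals (first | exact Pos_X | exact Pos_one | (apply ih <;> omega))
        · by_cases hc1 : 2*a = 2*(s:ℤ) + 2 + 1
          · have h00 := D_reflect1 s 2 a (by omega)
            have key : X*X * DP s 2 a + X*(1+X) * DP s 3 a + X * DP s 4 a
                + (1+X)*X * DP s 1 (a-1) + (1+X)*(1+X) * DP s 2 (a-1) + (1+X) * DP s 3 (a-1)
                + X * DP s 0 (a-2) + (1+X) * DP s 1 (a-2) + DP s 2 (a-2)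
                = X*(1+X) * DP s 3 a + X * DP s 4 a + (1+X)*X * DP s 1 (a-1)
                  + (1+X+X*X) * DP s 2 (a-1) + (1+X) * DP s 3 (a-1)
                  + (1+X) * DP s 1 (a-2) + DP s 2 (a-2) := by
              linear_combination X * h00 + X * hz
            rw [key]
            repeat' (first | apply Pos.add | apply Pos.mul)
            all_goals (first | exact Pos_X | exact Pos_one | (apply ih <;> omega))
          · have key : X*X * DP s 2 a + X*(1+X) * DP s 3 a + X * DP s 4 a
                + (1+X)*X * DP s 1 (a-1) + (1+X)*(1+X) * DP s 2 (a-1) + (1+X) * DP s 3 (a-1)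
                + X * DP s 0 (a-2) + (1+X) * DP s 1 (a-2) + DP s 2 (a-2)
                = X*X * DP s 2 a + X*(1+X) * DP s 3 a + X * DP s 4 a
                  + (1+X)*X * DP s 1 (a-1) + (1+X)*(1+X) * DP s 2 (a-1) + (1+X) * DP s 3 (a-1)
                  + (1+X) * DP s 1 (a-2) + DP s 2 (a-2) := by
              linear_combination X * hz
            rw [key]
            repeat' (first | apply Pos.add | apply Pos.mul)
            all_goals (first | exact Pos_X | exact Pos_one | (apply ih <;> omega))
      · by_cases hc2 : 2*a = 2*(s:ℤ) + d + 2
        · have h00 := D_reflect2 s d a (by omega)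
          have h01 := D_reflect1 s (d+1) a (by omega)
          have h10 := D_reflect1 s (d-1) (a-1) (by omega)
          rw [show (a-1-1 : ℤ) = a-2 by ring] at h10
          have key : X*X * DP s d a + X*(1+X) * DP s (d+1) a + X * DP s (d+2) a
              + (1+X)*X * DP s (d-1) (a-1) + (1+X)*(1+X) * DP s d (a-1) + (1+X) * DP s (d+1) (a-1)
              + X * DP s (d-2) (a-2) + (1+X) * DP s (d-1) (a-2) + DP s d (a-2)
              = X * DP s (d+2) a + (1+X)*(1+X) * DP s d (a-1) + X * DP s (d-2) (a-2) := by
            linear_combination h00 + (1+X) * h01 + (1+X) * h10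
          rw [key]
          repeat' (first | apply Pos.add | apply Pos.mul)
          all_goals (first | exact Pos_X | exact Pos_one | (apply ih <;> omega))
        · by_cases hc1 : 2*a = 2*(s:ℤ) + d + 1
          · have h00 := D_reflect1 s d a (by omega)
            have key : X*X * DP s d a + X*(1+X) * DP s (d+1) a + X * DP s (d+2) a
                + (1+X)*X * DP s (d-1) (a-1) + (1+X)*(1+X) * DP s d (a-1) + (1+X) * DP s (d+1) (a-1)
                + X * DP s (d-2) (a-2) + (1+X) * DP s (d-1) (a-2) + DP s d (a-2)
                = X*(1+X) * DP s (d+1) a + X * DP s (d+2) a + (1+X)*X * DP s (d-1) (a-1)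
                  + (1+X+X*X) * DP s d (a-1) + (1+X) * DP s (d+1) (a-1)
                  + X * DP s (d-2) (a-2) + (1+X) * DP s (d-1) (a-2) + DP s d (a-2) := by
              linear_combination X * h00
            rw [key]
            repeat' (first | apply Pos.add | apply Pos.mul)
            all_goals (first | exact Pos_X | exact Pos_one | (apply ih <;> omega))
          ·
            repeat' (first | apply Pos.add | apply Pos.mul)
            all_goals (first | exact Pos_X | exact Pos_one | (apply ih <;> omega))


/-- Coefficientwise form of the `q`-log-convexity of `W_n(q) = ∑_{k=0}^n C(n,k)^2 q^k`:
for all `n ≥ 1` and `r ≥ 0`,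
`∑_{k=0}^r C(n,k)^2 C(n,r-k)^2 ≤ ∑_{k=0}^r C(n+1,k)^2 C(n-1,r-k)^2`. -/
theorem sum_sq_choose_log_convex (n : ℕ) (hn : 1 ≤ n) (r : ℕ) :
    ∑ k ∈ Finset.range (r + 1), Nat.choose n k ^ 2 * Nat.choose n (r - k) ^ 2 ≤
      ∑ k ∈ Finset.range (r + 1),
        Nat.choose (n + 1) k ^ 2 * Nat.choose (n - 1) (r - k) ^ 2 := by
  obtain ⟨k, rfl⟩ : ∃ k, n = k + 1 := ⟨n - 1, by omega⟩
  have e1 : (gP (k+2) ((k:ℤ)+2) * gP k (k:ℤ)).coeff r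
      = ∑ j ∈ Finset.range (r + 1), ((k+2).choose j : ℤ)^2 * ((k).choose (r-j) : ℤ)^2 := by
    rw [coeff_mul, Finset.Nat.sum_antidiagonal_eq_sum_range_succ_mk]
    refine Finset.sum_congr rfl fun j hj => ?_
    rw [central_coeff (k+2) _ (by push_cast; ring) j, central_coeff k _ rfl (r-j)]
  have e2 : (gP (k+1) ((k:ℤ)+1) * gP (k+1) ((k:ℤ)+1)).coeff r
      = ∑ j ∈ Finset.range (r + 1), ((k+1).choose j : ℤ)^2 * ((k+1).choose (r-j) : ℤ)^2 := by
    rw [coeff_mul, Finset.Nat.sum_antidiagonal_eq_sum_range_succ_mk]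
    refine Finset.sum_congr rfl fun j hj => ?_
    rw [central_coeff (k+1) _ (by push_cast; ring) j, central_coeff (k+1) _ (by push_cast; ring) (r-j)]
  have hpos : Pos (DP k 1 (k:ℤ)) := DP_pos k 1 (k:ℤ) (by norm_num) (by omega)
  have hkey : (0:ℤ) ≤ (gP (k+2) ((k:ℤ)+2) * gP k (k:ℤ)).coeff r
      - (gP (k+1) ((k:ℤ)+1) * gP (k+1) ((k:ℤ)+1)).coeff r := by
    have := final_id k
    have hc : (gP (k+2) ((k:ℤ)+2) * gP k (k:ℤ)
        - gP (k+1) ((k:ℤ)+1) * gP (k+1) ((k:ℤ)+1)).coeff r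
        = (DP k 1 (k:ℤ)).coeff r + (DP k 1 (k:ℤ)).coeff r := by
      rw [this, coeff_add]
    rw [coeff_sub] at hc
    have h1 := hpos r
    omega
  rw [e1, e2] at hkey
  have hZ : (∑ j ∈ Finset.range (r + 1), ((k+1).choose j : ℤ)^2 * ((k+1).choose (r-j) : ℤ)^2)
      ≤ ∑ j ∈ Finset.range (r + 1), ((k+2).choose j : ℤ)^2 * ((k).choose (r-j) : ℤ)^2 := by omega
  have hfix1 : k + 1 + 1 = k + 2 := rfl
  have hfix2 : k + 1 - 1 = k := rfl
  rw [hfix1, hfix2]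
  exact_mod_cast hZ
end

section
/- Let {a(n,k)}_{0≤k≤n} be a triangular array of nonnegative real numbers (with a(n,k) = 0 for k < 0 or k > n), and set A_n(q) = ∑_{k=0}^n a(n,k) q^k and α(n,r,k) = a(n+1,k)a(n−1,r−k) + a(n+1,r−k)a(n−1,k) − 2a(n,r−k)a(n,k). Assume (i) the polynomials {A_n(q)}_{n≥0} form a q-log-convex sequence, and (ii) for every n ≥ 1 and 0 ≤ r ≤ 2n there exists an integer k' = k'(n,r) such that for all integers 0 ≤ k ≤ ⌊r/2⌋: α(n,r,k) ≥ 0 whenever k ≤ k', and α(n,r,k) ≤ 0 whenever k > k'. Then for every log-convex sequence {x_k}_{k≥0} of nonnegative real numbers, the sequence y_n = ∑_{k=0}^n a(n,k) x_k is log-convex. -/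
lemma lw_xstep (x : ℕ → ℝ) (hx0 : ∀ k, 0 ≤ x k)
    (hlc : ∀ k : ℕ, 1 ≤ k → x k ^ 2 ≤ x (k - 1) * x (k + 1)) :
    ∀ (d k : ℕ), x (k+1) * x (k+1+d) ≤ x k * x (k+2+d) := by
  have key : ∀ k, x (k+1)^2 ≤ x k * x (k+2) := by
    intro k
    have := hlc (k+1) (by omega)
    simpa using this
  intro d
  induction d with
  | zero =>
    intro k
    have := key k
    nlinarith [this]
  | succ d ih =>
    intro k
    rcases eq_or_lt_of_le (hx0 (k+1)) with h|h
    · rw [← h, zero_mul]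
      exact mul_nonneg (hx0 _) (hx0 _)
    · have h1 := key k
      have h2 := ih (k+1)
      have e1 : k+1+(d+1) = k+2+d := by omega
      have e2 : k+2+(d+1) = k+1+2+d := by omega
      have e3 : k+1+1 = k+2 := by omega
      rw [e1, e2]
      rw [e3] at h2
      nlinarith [hx0 k, hx0 (k+2+d), mul_le_mul_of_nonneg_right h1 (hx0 (k+2+d)),
        mul_le_mul_of_nonneg_left h2 (hx0 k)]

lemma lw_umono (x : ℕ → ℝ) (hx0 : ∀ k, 0 ≤ x k)
    (hlc : ∀ k : ℕ, 1 ≤ k → x k ^ 2 ≤ x (k - 1) * x (k + 1)) (r : ℕ) :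
    ∀ j i, i ≤ j → 2*j ≤ r → x j * x (r-j) ≤ x i * x (r-i) := by
  intro j
  induction j with
  | zero =>
    intro i hi _
    have : i = 0 := by omega
    subst this; exact le_refl _
  | succ j ih =>
    intro i hij h2j
    rcases Nat.lt_or_ge i (j+1) with h|h
    · have step : x (j+1) * x (r-(j+1)) ≤ x j * x (r-j) := by
        have := lw_xstep x hx0 hlc (r - 2*j - 2) j
        have e1 : j+1+(r-2*j-2) = r - (j+1) := by omega
        have e2 : j+2+(r-2*j-2) = r - j := by omega
        rwa [e1, e2] at this
      exact le_trans step (ih i (by omega) (by omega))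
    · have : i = j+1 := by omega
      subst this; exact le_refl _

lemma lw_abel (m : ℕ) (w u : ℕ → ℝ) (k' : ℤ)
    (hu0 : ∀ j, j ≤ m → 0 ≤ u j)
    (humono : ∀ i j, i ≤ j → j ≤ m → u j ≤ u i)
    (hw : ∀ k, k ≤ m → ((k:ℤ) ≤ k' → 0 ≤ w k) ∧ (k' < (k:ℤ) → w k ≤ 0))
    (hsum : 0 ≤ ∑ k ∈ Finset.range (m+1), w k) :
    0 ≤ ∑ k ∈ Finset.range (m+1), w k * u k := by
  set K : ℕ := (max 0 (min k' (m:ℤ))).toNat with hKdef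
  have hK : (K:ℤ) = max 0 (min k' (m:ℤ)) := by
    rw [hKdef]; exact Int.toNat_of_nonneg (le_max_left _ _)
  have hKm : K ≤ m := by omega
  have step : (∑ k ∈ Finset.range (m+1), w k) * u K ≤ ∑ k ∈ Finset.range (m+1), w k * u k := by
    rw [Finset.sum_mul]
    apply Finset.sum_le_sum
    intro k hk
    have hkm : k ≤ m := by
      have := Finset.mem_range.mp hk; omega
    rcases le_or_gt (k:ℤ) k' with h|h
    · have hwk : 0 ≤ w k := (hw k hkm).1 h
      have hkK : k ≤ K := by omega
      exact mul_le_mul_of_nonneg_left (humono k K hkK hKm) hwk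
    · have hwk : w k ≤ 0 := (hw k hkm).2 h
      have hKk : K ≤ k := by omega
      exact mul_le_mul_of_nonpos_left (humono K k hKk hkm) hwk
  calc (0:ℝ) ≤ (∑ k ∈ Finset.range (m+1), w k) * u K := mul_nonneg hsum (hu0 K hKm)
    _ ≤ _ := step

lemma lw_pair : ∀ (r : ℕ) (f : ℕ → ℝ), ∑ k ∈ Finset.range (r+1), f k
    = ∑ k ∈ Finset.range (r/2+1), (if 2*k = r then f k else f k + f (r-k)) := by
  intro r
  induction r using Nat.strong_induction_on with
  | _ r ih =>
    match r with
    | 0 => intro f; simp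
    | 1 =>
      intro f
      norm_num [Finset.sum_range_succ]
    | (r+2) =>
      intro f
      have h1 : ∑ k ∈ Finset.range (r+3), f k
          = f 0 + f (r+2) + ∑ k ∈ Finset.range (r+1), f (k+1) := by
        rw [Finset.sum_range_succ, Finset.sum_range_succ']
        ring
      have h2 : (r+2)/2 + 1 = (r/2 + 1) + 1 := by omega
      rw [h1, ih r (by omega) (fun k => f (k+1)), h2]
      rw [Finset.sum_range_succ' (fun k => if 2*k = r+2 then f k else f k + f (r+2-k)) (r/2+1)]
      have h4 : ∀ k ∈ Finset.range (r/2+1),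
          (if 2*(k+1) = r+2 then f (k+1) else f (k+1) + f (r+2-(k+1)))
          = (if 2*k = r then f (k+1) else f (k+1) + f (r-k+1)) := by
        intro k hk
        have hkr : k ≤ r / 2 := by have := Finset.mem_range.mp hk; omega
        have e : r+2-(k+1) = r-k+1 := by omega
        rw [e]
        by_cases h : 2*k = r
        · rw [if_pos (by omega), if_pos h]
        · rw [if_neg (by omega), if_neg h]
      rw [Finset.sum_congr rfl h4, if_neg (show ¬(2*0 = r+2) by omega)]
      norm_num
      ring

lemma lw_coeff_of_sum (c : ℕ → ℝ) (N j : ℕ) :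
    (∑ k ∈ Finset.range N, Polynomial.C (c k) * Polynomial.X ^ k).coeff j
      = if j < N then c j else 0 := by
  rw [Polynomial.finset_sum_coeff]
  simp only [Polynomial.coeff_C_mul, Polynomial.coeff_X_pow, mul_ite, mul_one, mul_zero]
  rw [Finset.sum_ite_eq (Finset.range N) j c]
  simp [Finset.mem_range]

/-- Liu and Wang's sufficient condition for a triangular array to give a
log-convexity preserving linear transformation.

Here `a n k` is a triangular array of nonnegative reals (`a n k = 0` for `k > n`;
negative indices never occur).  `A n = ∑_{k=0}^n a n k * q^k` are the associated
polynomials, assumed to form a `q`-log-convex sequence, and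
`α n r k = a (n+1) k * a (n-1) (r-k) + a (n+1) (r-k) * a (n-1) k - 2 * a n (r-k) * a n k`
is assumed to change sign (from nonnegative to nonpositive) at most once on
`0 ≤ k ≤ ⌊r/2⌋`, for each `n ≥ 1` and `0 ≤ r ≤ 2n`.  Then `y n = ∑_{k=0}^n a n k * x k`
is log-convex whenever `x` is a log-convex sequence of nonnegative reals. -/
theorem liu_wang_log_convexity_preserving (a : ℕ → ℕ → ℝ)
    (ha_nonneg : ∀ n k, 0 ≤ a n k)
    (ha_zero : ∀ n k, n < k → a n k = 0)
    (A : ℕ → Polynomial ℝ)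
    (hA : ∀ n, A n = ∑ k ∈ Finset.range (n + 1), Polynomial.C (a n k) * Polynomial.X ^ k)
    (hqlc : ∀ n : ℕ, 1 ≤ n → ∀ i : ℕ, 0 ≤ (A (n + 1) * A (n - 1) - A n ^ 2).coeff i)
    (hα : ∀ n : ℕ, 1 ≤ n → ∀ r : ℕ, r ≤ 2 * n → ∃ k' : ℤ, ∀ k : ℕ, k ≤ r / 2 →
      ((k : ℤ) ≤ k' →
        0 ≤ a (n + 1) k * a (n - 1) (r - k) + a (n + 1) (r - k) * a (n - 1) k -
              2 * a n (r - k) * a n k) ∧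
      (k' < (k : ℤ) →
        a (n + 1) k * a (n - 1) (r - k) + a (n + 1) (r - k) * a (n - 1) k -
            2 * a n (r - k) * a n k ≤ 0))
    (x : ℕ → ℝ) (hx_nonneg : ∀ k, 0 ≤ x k)
    (hx_lc : ∀ k : ℕ, 1 ≤ k → x k ^ 2 ≤ x (k - 1) * x (k + 1))
    (y : ℕ → ℝ) (hy : ∀ n, y n = ∑ k ∈ Finset.range (n + 1), a n k * x k)
    (n : ℕ) (hn : 1 ≤ n) :
    y n ^ 2 ≤ y (n - 1) * y (n + 1) := by
  have coeffA : ∀ m j, (A m).coeff j = a m j := by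
    intro m j
    rw [hA, lw_coeff_of_sum]
    split
    · rfl
    · exact (ha_zero m j (by omega)).symm
  set Px : ℕ → Polynomial ℝ :=
    fun m => ∑ k ∈ Finset.range (m+1), Polynomial.C (a m k * x k) * Polynomial.X ^ k with hPx
  have coeffPx : ∀ m j, (Px m).coeff j = a m j * x j := by
    intro m j
    rw [hPx, lw_coeff_of_sum]
    split
    · rfl
    · rw [ha_zero m j (by omega), zero_mul]
  have evalPx : ∀ m, (Px m).eval 1 = y m := by
    intro m
    rw [hy, hPx]
    simp [Polynomial.eval_finset_sum]
  set Q : Polynomial ℝ := Px (n+1) * Px (n-1) - Px n ^ 2 with hQdef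
  have coeffQ : ∀ r, Q.coeff r = ∑ k ∈ Finset.range (r+1),
      ((a (n+1) k * x k) * (a (n-1) (r-k) * x (r-k))
        - (a n k * x k) * (a n (r-k) * x (r-k))) := by
    intro r
    rw [hQdef, Polynomial.coeff_sub, sq, Polynomial.coeff_mul, Polynomial.coeff_mul,
      Finset.Nat.sum_antidiagonal_eq_sum_range_succ_mk,
      Finset.Nat.sum_antidiagonal_eq_sum_range_succ_mk, ← Finset.sum_sub_distrib]
    exact Finset.sum_congr rfl (fun k _ => by rw [coeffPx, coeffPx, coeffPx, coeffPx])
  have hQ : ∀ r, 0 ≤ Q.coeff r := by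
    intro r
    rw [coeffQ]
    rcases Nat.lt_or_ge (2*n) r with hr | hr
    · -- large r : the negative part vanishes termwise
      apply Finset.sum_nonneg
      intro k hk
      have hz : a n k * a n (r-k) = 0 := by
        rcases Nat.lt_or_ge n k with h | h
        · rw [ha_zero n k h, zero_mul]
        · rw [ha_zero n (r-k) (by omega), mul_zero]
      have : (a n k * x k) * (a n (r-k) * x (r-k)) = 0 := by
        rw [show (a n k * x k) * (a n (r-k) * x (r-k))
            = (a n k * a n (r-k)) * (x k * x (r-k)) by ring, hz, zero_mul]
      rw [this, sub_zero]
      exact mul_nonneg (mul_nonneg (ha_nonneg _ _) (hx_nonneg _))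
        (mul_nonneg (ha_nonneg _ _) (hx_nonneg _))
    · -- main case
      obtain ⟨k', hk'⟩ := hα n hn r hr
      set f : ℕ → ℝ := fun k => a (n+1) k * a (n-1) (r-k) - a n k * a n (r-k) with hf
      set u : ℕ → ℝ := fun k => x k * x (r-k) with hu
      have e1 : ∑ k ∈ Finset.range (r+1),
          ((a (n+1) k * x k) * (a (n-1) (r-k) * x (r-k))
            - (a n k * x k) * (a n (r-k) * x (r-k)))
          = ∑ k ∈ Finset.range (r+1), f k * u k :=
        Finset.sum_congr rfl (fun k _ => by rw [hf, hu]; ring)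
      rw [e1, lw_pair r (fun k => f k * u k)]
      have e2 : ∀ k ∈ Finset.range (r/2+1),
          (if 2*k = r then f k * u k else f k * u k + f (r-k) * u (r-k))
          = (if 2*k = r then f k else f k + f (r-k)) * u k := by
        intro k hk
        have hkr : k ≤ r/2 := by have := Finset.mem_range.mp hk; omega
        by_cases h : 2*k = r
        · rw [if_pos h, if_pos h]
        · rw [if_neg h, if_neg h]
          have eu : u (r-k) = u k := by
            rw [hu]
            have : r - (r-k) = k := by omega
            simp only []
            rw [this]
            ring
          rw [eu]; ring
      rw [Finset.sum_congr rfl e2]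
      -- apply the Abel-type lemma
      apply lw_abel (r/2) _ u k'
      · intro j _
        exact mul_nonneg (hx_nonneg _) (hx_nonneg _)
      · intro i j hij hjm
        exact lw_umono x hx_nonneg hx_lc r j i hij (by omega)
      · intro k hkm
        have hα2 := hk' k hkm
        have erk : r - (r - k) = k := by omega
        constructor
        · intro hkk
          have h1 := hα2.1 hkk
          by_cases h : 2*k = r
          · rw [if_pos h]
            have : r - k = k := by omega
            rw [this] at h1
            rw [hf]
            simp only []
            rw [this]
            nlinarith [h1]
          · rw [if_neg h, hf]
            simp only []
            rw [erk]
            nlinarith [h1]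
        · intro hkk
          have h1 := hα2.2 hkk
          by_cases h : 2*k = r
          · rw [if_pos h]
            have : r - k = k := by omega
            rw [this] at h1
            rw [hf]
            simp only []
            rw [this]
            nlinarith [h1]
          · rw [if_neg h, hf]
            simp only []
            rw [erk]
            nlinarith [h1]
      · -- total sum nonnegative from q-log-convexity
        rw [← lw_pair r f]
        have e3 : (A (n+1) * A (n-1) - A n ^ 2).coeff r = ∑ k ∈ Finset.range (r+1), f k := by
          rw [Polynomial.coeff_sub, sq, Polynomial.coeff_mul, Polynomial.coeff_mul,
            Finset.Nat.sum_antidiagonal_eq_sum_range_succ_mk,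
            Finset.Nat.sum_antidiagonal_eq_sum_range_succ_mk, ← Finset.sum_sub_distrib]
          exact Finset.sum_congr rfl
            (fun k _ => by rw [coeffA, coeffA, coeffA, coeffA, hf])
        rw [← e3]
        exact hqlc n hn r
  -- conclude
  have hev : Q.eval 1 = y (n+1) * y (n-1) - y n ^ 2 := by
    rw [hQdef]
    rw [Polynomial.eval_sub, Polynomial.eval_mul, Polynomial.eval_pow, evalPx, evalPx, evalPx]
  have hpos : 0 ≤ Q.eval 1 := by
    rw [Polynomial.eval_eq_sum_range]
    apply Finset.sum_nonneg
    intro i _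
    simpa using hQ i
  rw [hev] at hpos
  linarith
end

section
/- If {x_k}_{k≥0} is a log-convex sequence of nonnegative real numbers, then the sequence y_n = ∑_{k=0}^n C(n,k)^2 x_k is log-convex; that is, y_{n-1}y_{n+1} ≥ y_n^2 for all n ≥ 1. In other words, the linear transformation with respect to the triangular array {C(n,k)^2}_{0≤k≤n} is log-convexity preserving. -/
namespace ChooseSqLC

open Finset Real

/-- The real-valued binomial coefficient of `m`. -/
noncomputable def c (m k : ℕ) : ℝ := (m.choose k : ℝ)

lemma c_nonneg (m k : ℕ) : 0 ≤ c m k := by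
  unfold c; positivity

lemma c_top (m : ℕ) : c m (m + 1) = 0 := by
  unfold c
  rw [Nat.choose_eq_zero_of_lt (by omega)]
  norm_num

lemma c_top2 (m : ℕ) : c m (m + 2) = 0 := by
  unfold c
  rw [Nat.choose_eq_zero_of_lt (by omega)]
  norm_num

lemma pascal (m k : ℕ) : c (m + 1) (k + 1) = c m k + c m (k + 1) := by
  unfold c
  rw [Nat.choose_succ_succ]
  push_cast
  ring

/-- `F = ∑ C(m,k)² x_k`. -/
noncomputable def Fm (x : ℕ → ℝ) (m : ℕ) : ℝ :=
  ∑ k ∈ Finset.range (m + 1), c m k ^ 2 * x k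

/-- `G01 = ∑ C(m,k)² x_{k+1}`. -/
noncomputable def G01 (x : ℕ → ℝ) (m : ℕ) : ℝ :=
  ∑ k ∈ Finset.range (m + 1), c m k ^ 2 * x (k + 1)

/-- `G02 = ∑ C(m,k)² x_{k+2}`. -/
noncomputable def G02 (x : ℕ → ℝ) (m : ℕ) : ℝ :=
  ∑ k ∈ Finset.range (m + 1), c m k ^ 2 * x (k + 2)

/-- `G11 = ∑ C(m,k)C(m,k+1) x_{k+1}`. -/
noncomputable def G11 (x : ℕ → ℝ) (m : ℕ) : ℝ :=
  ∑ k ∈ Finset.range (m + 1), c m k * c m (k + 1) * x (k + 1)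

/-- `G12 = ∑ C(m,k)C(m,k+1) x_{k+2}`. -/
noncomputable def G12 (x : ℕ → ℝ) (m : ℕ) : ℝ :=
  ∑ k ∈ Finset.range (m + 1), c m k * c m (k + 1) * x (k + 2)

/-- `G22 = ∑ C(m,k)C(m,k+2) x_{k+2}`. -/
noncomputable def G22 (x : ℕ → ℝ) (m : ℕ) : ℝ :=
  ∑ k ∈ Finset.range (m + 1), c m k * c m (k + 2) * x (k + 2)

/-- Padding: the `k = m` term of `G`-type sums over `c m (k+1)` vanishes. -/
lemma sum_c_succ_sq (x : ℕ → ℝ) (m : ℕ) (f : ℕ → ℝ) :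
    ∑ k ∈ Finset.range (m + 1), c m (k + 1) ^ 2 * f k
      = ∑ k ∈ Finset.range m, c m (k + 1) ^ 2 * f k := by
  rw [Finset.sum_range_succ, c_top]
  simp

lemma Fm_eq (x : ℕ → ℝ) (m : ℕ) :
    Fm x m = (∑ k ∈ Finset.range (m + 1), c m (k + 1) ^ 2 * x (k + 1)) + x 0 := by
  unfold Fm
  rw [Finset.sum_range_succ' (fun k => c m k ^ 2 * x k) m]
  rw [sum_c_succ_sq x m (fun k => x (k + 1))]
  have h0 : c m 0 = 1 := by unfold c; norm_num
  rw [h0]; ring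

lemma G01_eq (x : ℕ → ℝ) (m : ℕ) :
    G01 x m = (∑ k ∈ Finset.range (m + 1), c m (k + 1) ^ 2 * x (k + 2)) + x 1 := by
  unfold G01
  rw [Finset.sum_range_succ' (fun k => c m k ^ 2 * x (k + 1)) m]
  rw [sum_c_succ_sq x m (fun k => x (k + 2))]
  have h0 : c m 0 = 1 := by unfold c; norm_num
  rw [h0]; ring

lemma G11_eq (x : ℕ → ℝ) (m : ℕ) :
    G11 x m = (∑ k ∈ Finset.range (m + 1), c m (k + 1) * c m (k + 2) * x (k + 2))
      + c m 0 * c m 1 * x 1 := by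
  unfold G11
  rw [Finset.sum_range_succ' (fun k => c m k * c m (k + 1) * x (k + 1)) m]
  congr 1
  rw [Finset.sum_range_succ, c_top]
  have h1 : ∑ k ∈ Finset.range m, c m (k + 1) * c m (k + 1 + 1) * x (k + 1 + 1)
      = ∑ k ∈ Finset.range m, c m (k + 1) * c m (k + 2) * x (k + 2) := by
    apply Finset.sum_congr rfl; intro k _; norm_num
  have h2 : ∑ k ∈ Finset.range (m + 1), c m (k + 1) * c m (k + 2) * x (k + 2)
      = ∑ k ∈ Finset.range m, c m (k + 1) * c m (k + 2) * x (k + 2) := by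
    rw [Finset.sum_range_succ, c_top]
    simp
  rw [h1]
  simp

/-- Expansion of `y (m+1)` in terms of level-`m` sums. -/
lemma Y1 (x : ℕ → ℝ) (m : ℕ) :
    ∑ k ∈ Finset.range (m + 2), c (m + 1) k ^ 2 * x k
      = Fm x m + 2 * G11 x m + G01 x m := by
  rw [Finset.sum_range_succ' (fun k => c (m + 1) k ^ 2 * x k) (m + 1)]
  have h0 : c (m + 1) 0 = 1 := by unfold c; norm_num
  have hterm : ∀ k ∈ Finset.range (m + 1),
      c (m + 1) (k + 1) ^ 2 * x (k + 1)
        = c m k ^ 2 * x (k + 1) + 2 * (c m k * c m (k + 1) * x (k + 1))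
          + c m (k + 1) ^ 2 * x (k + 1) := by
    intro k _
    rw [pascal]; ring
  rw [Finset.sum_congr rfl hterm]
  rw [Finset.sum_add_distrib, Finset.sum_add_distrib]
  rw [← Finset.mul_sum]
  have hF := Fm_eq x m
  unfold G01 G11
  rw [h0]
  linarith [hF]

/-- Two-step Pascal. -/
lemma pascal2 (m k : ℕ) :
    c (m + 2) (k + 2) = c m k + 2 * c m (k + 1) + c m (k + 2) := by
  rw [show m + 2 = (m + 1) + 1 by rfl, pascal (m + 1) (k + 1), pascal m k,
    show k + 2 = (k + 1) + 1 by rfl, pascal m (k + 1)]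
  ring

/-- Expansion of `y (m+2)` in terms of level-`m` sums. -/
lemma Y2 (x : ℕ → ℝ) (m : ℕ) :
    ∑ k ∈ Finset.range (m + 3), c (m + 2) k ^ 2 * x k
      = Fm x m + 4 * G11 x m + 4 * G01 x m + 2 * G22 x m + 4 * G12 x m + G02 x m := by
  rw [Finset.sum_range_succ' (fun k => c (m + 2) k ^ 2 * x k) (m + 2)]
  rw [Finset.sum_range_succ' (fun k => c (m + 2) (k + 1) ^ 2 * x (k + 1)) (m + 1)]
  have h0 : c (m + 2) 0 = 1 := by unfold c; norm_num
  have h1 : c (m + 2) 1 = (m : ℝ) + 2 := by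
    unfold c
    rw [Nat.choose_one_right]
    push_cast; ring
  have hterm : ∀ k ∈ Finset.range (m + 1),
      c (m + 2) (k + 1 + 1) ^ 2 * x (k + 1 + 1)
        = c m k ^ 2 * x (k + 2)
          + 4 * (c m (k + 1) ^ 2 * x (k + 2))
          + c m (k + 2) ^ 2 * x (k + 2)
          + 4 * (c m k * c m (k + 1) * x (k + 2))
          + 2 * (c m k * c m (k + 2) * x (k + 2))
          + 4 * (c m (k + 1) * c m (k + 2) * x (k + 2)) := by
    intro k _
    have : k + 1 + 1 = k + 2 := rfl
    rw [this, pascal2]; ring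
  rw [Finset.sum_congr rfl hterm]
  rw [Finset.sum_add_distrib, Finset.sum_add_distrib, Finset.sum_add_distrib,
    Finset.sum_add_distrib, Finset.sum_add_distrib]
  rw [← Finset.mul_sum, ← Finset.mul_sum, ← Finset.mul_sum, ← Finset.mul_sum]
  -- identify the six sums
  have hc1 : c m 1 = (m : ℝ) := by
    unfold c; rw [Nat.choose_one_right]
  have hc0 : c m 0 = 1 := by unfold c; norm_num
  -- T2 : ∑ c m (k+1)^2 x_{k+2} = G01 - x 1
  have hT2 : ∑ k ∈ Finset.range (m + 1), c m (k + 1) ^ 2 * x (k + 2) = G01 x m - x 1 := by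
    have := G01_eq x m; linarith
  -- T3 : ∑ c m (k+2)^2 x_{k+2} = F - x 0 - m^2 x 1
  have hT3 : ∑ k ∈ Finset.range (m + 1), c m (k + 2) ^ 2 * x (k + 2)
      = Fm x m - x 0 - (m : ℝ) ^ 2 * x 1 := by
    have hF := Fm_eq x m
    -- ∑_{range (m+1)} c m (k+1)^2 x_{k+1} : peel first term
    have h2 : ∑ k ∈ Finset.range (m + 1), c m (k + 1) ^ 2 * x (k + 1)
        = (∑ k ∈ Finset.range m, c m (k + 1 + 1) ^ 2 * x (k + 1 + 1)) + c m 1 ^ 2 * x 1 := by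
      rw [Finset.sum_range_succ' (fun k => c m (k + 1) ^ 2 * x (k + 1)) m]
    have h3 : ∑ k ∈ Finset.range (m + 1), c m (k + 2) ^ 2 * x (k + 2)
        = ∑ k ∈ Finset.range m, c m (k + 2) ^ 2 * x (k + 2) := by
      rw [Finset.sum_range_succ, c_top2]
      simp
    have h4 : ∑ k ∈ Finset.range m, c m (k + 1 + 1) ^ 2 * x (k + 1 + 1)
        = ∑ k ∈ Finset.range m, c m (k + 2) ^ 2 * x (k + 2) := by
      apply Finset.sum_congr rfl; intro k _; norm_num
    rw [h3, ← h4]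
    rw [hc1] at h2
    linarith [hF, h2]
  -- T4 : ∑ c m (k+1) c m (k+2) x_{k+2} = G11 - m x 1
  have hT4 : ∑ k ∈ Finset.range (m + 1), c m (k + 1) * c m (k + 2) * x (k + 2)
      = G11 x m - (m : ℝ) * x 1 := by
    have := G11_eq x m
    rw [hc0, hc1] at this
    linarith
  unfold G02 G12 G22 at *
  rw [hT2, hT3, hT4, h0, h1]
  ring

/-- The key Cauchy–Schwarz estimate:
`(G01 + 2 G11)² ≤ F * (2 G01 + 2 G22 + 4 G12 + G02)` for positive log-convex `x`. -/
lemma key (x : ℕ → ℝ) (hxpos : ∀ k, 0 < x k)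
    (hlc : ∀ k, x (k + 1) ^ 2 ≤ x k * x (k + 2)) (m : ℕ) :
    (G01 x m + 2 * G11 x m) ^ 2
      ≤ Fm x m * (2 * G01 x m + 2 * G22 x m + 4 * G12 x m + G02 x m) := by
  classical
  set A : ℕ → ℝ := fun k => c m k * Real.sqrt (x k) with hA
  set W : ℕ → ℝ := fun k => match k with
    | 0 => 0
    | (j + 1) => c m j * Real.sqrt (x (j + 1)) with hW
  set P : ℕ → ℝ := fun k => (c m k + c m (k + 1)) * x (k + 1) / Real.sqrt (x k) with hP
  have hsqrt_pos : ∀ k, 0 < Real.sqrt (x k) := fun k => Real.sqrt_pos.mpr (hxpos k)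
  have hsqrt_ne : ∀ k, Real.sqrt (x k) ≠ 0 := fun k => (hsqrt_pos k).ne'
  have hsq : ∀ k, Real.sqrt (x k) ^ 2 = x k := fun k => Real.sq_sqrt (hxpos k).le
  have hmul_self : ∀ k, Real.sqrt (x k) * Real.sqrt (x k) = x k :=
    fun k => Real.mul_self_sqrt (hxpos k).le
  -- ⟨A, P⟩ = G01 + G11
  have hAP : ∑ k ∈ Finset.range (m + 1), A k * P k = G01 x m + G11 x m := by
    have hterm : ∀ k ∈ Finset.range (m + 1),
        A k * P k = c m k ^ 2 * x (k + 1) + c m k * c m (k + 1) * x (k + 1) := by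
      intro k _
      have step : A k * P k = (c m k * (c m k + c m (k + 1)) * x (k + 1))
          * (Real.sqrt (x k) * (Real.sqrt (x k))⁻¹) := by
        simp only [hA, hP]
        rw [div_eq_mul_inv]; ring
      rw [step, mul_inv_cancel₀ (hsqrt_ne k)]
      ring
    rw [Finset.sum_congr rfl hterm, Finset.sum_add_distrib]
    rfl
  -- ⟨A, W⟩ = G11
  have hAW : ∑ k ∈ Finset.range (m + 1), A k * W k = G11 x m := by
    rw [Finset.sum_range_succ' (fun k => A k * W k) m]
    have hW0 : W 0 = 0 := rfl
    have hterm : ∀ k ∈ Finset.range m,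
        A (k + 1) * W (k + 1) = c m k * c m (k + 1) * x (k + 1) := by
      intro k _
      show (c m (k + 1) * Real.sqrt (x (k + 1))) * (c m k * Real.sqrt (x (k + 1))) = _
      rw [show (c m (k + 1) * Real.sqrt (x (k + 1))) * (c m k * Real.sqrt (x (k + 1)))
          = c m k * c m (k + 1) * (Real.sqrt (x (k + 1)) * Real.sqrt (x (k + 1))) by ring,
        hmul_self]
    rw [Finset.sum_congr rfl hterm, hW0]
    unfold G11
    rw [Finset.sum_range_succ, c_top]
    ring
  -- ∑ A² = F
  have hA2 : ∑ k ∈ Finset.range (m + 1), A k ^ 2 = Fm x m := by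
    apply Finset.sum_congr rfl
    intro k _
    simp only [hA]
    rw [mul_pow, hsq]
  -- ∑ P² ≤ G02 + 2 G12 + G01
  have hP2 : ∑ k ∈ Finset.range (m + 1), P k ^ 2
      ≤ G02 x m + 2 * G12 x m + G01 x m := by
    have hle : ∀ k ∈ Finset.range (m + 1),
        P k ^ 2 ≤ (c m k + c m (k + 1)) ^ 2 * x (k + 2) := by
      intro k _
      simp only [hP]
      rw [div_pow, mul_pow, hsq]
      rw [div_le_iff₀ (hxpos k)]
      have h1 : x (k + 1) ^ 2 ≤ x k * x (k + 2) := hlc k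
      have h2 : (0:ℝ) ≤ (c m k + c m (k + 1)) ^ 2 := sq_nonneg _
      calc (c m k + c m (k + 1)) ^ 2 * x (k + 1) ^ 2
          ≤ (c m k + c m (k + 1)) ^ 2 * (x k * x (k + 2)) := by
            exact mul_le_mul_of_nonneg_left h1 h2
        _ = (c m k + c m (k + 1)) ^ 2 * x (k + 2) * x k := by ring
    have h2 : ∑ k ∈ Finset.range (m + 1), P k ^ 2
        ≤ ∑ k ∈ Finset.range (m + 1), (c m k + c m (k + 1)) ^ 2 * x (k + 2) :=
      Finset.sum_le_sum hle
    have h3 : ∑ k ∈ Finset.range (m + 1), (c m k + c m (k + 1)) ^ 2 * x (k + 2)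
        = G02 x m + 2 * G12 x m + (G01 x m - x 1) := by
      have hterm : ∀ k ∈ Finset.range (m + 1),
          (c m k + c m (k + 1)) ^ 2 * x (k + 2)
            = c m k ^ 2 * x (k + 2) + 2 * (c m k * c m (k + 1) * x (k + 2))
              + c m (k + 1) ^ 2 * x (k + 2) := by
        intro k _; ring
      rw [Finset.sum_congr rfl hterm, Finset.sum_add_distrib, Finset.sum_add_distrib,
        ← Finset.mul_sum]
      have hT2 : ∑ k ∈ Finset.range (m + 1), c m (k + 1) ^ 2 * x (k + 2)
          = G01 x m - x 1 := by
        have := G01_eq x m; linarith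
      rw [hT2]
      unfold G02 G12
      ring
    have hx1 : 0 < x 1 := hxpos 1
    linarith
  -- ∑ P * W = G12 + G22 (exact)
  have hPW : ∑ k ∈ Finset.range (m + 1), P k * W k = G12 x m + G22 x m := by
    rw [Finset.sum_range_succ' (fun k => P k * W k) m]
    have hW0 : W 0 = 0 := rfl
    have hterm : ∀ k ∈ Finset.range m,
        P (k + 1) * W (k + 1)
          = c m k * c m (k + 1) * x (k + 2) + c m k * c m (k + 2) * x (k + 2) := by
      intro k _
      show ((c m (k + 1) + c m (k + 1 + 1)) * x (k + 1 + 1) / Real.sqrt (x (k + 1)))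
          * (c m k * Real.sqrt (x (k + 1))) = _
      rw [div_mul_eq_mul_div, mul_comm (c m k) (Real.sqrt (x (k + 1)))]
      rw [show (c m (k + 1) + c m (k + 1 + 1)) * x (k + 1 + 1) * (Real.sqrt (x (k + 1)) * c m k)
          = ((c m (k + 1) + c m (k + 1 + 1)) * x (k + 1 + 1) * c m k) * Real.sqrt (x (k + 1))
          by ring]
      rw [mul_div_assoc, div_self (hsqrt_ne (k + 1)), mul_one]
      norm_num
      ring
    rw [Finset.sum_congr rfl hterm, hW0, Finset.sum_add_distrib]
    have hG12 : ∑ k ∈ Finset.range m, c m k * c m (k + 1) * x (k + 2) = G12 x m := by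
      unfold G12
      rw [Finset.sum_range_succ, c_top]
      ring
    have hG22 : ∑ k ∈ Finset.range m, c m k * c m (k + 2) * x (k + 2) = G22 x m := by
      unfold G22
      rw [Finset.sum_range_succ, c_top2]
      ring
    rw [hG12, hG22]
    ring
  -- ∑ W² ≤ G01
  have hW2 : ∑ k ∈ Finset.range (m + 1), W k ^ 2 ≤ G01 x m := by
    rw [Finset.sum_range_succ' (fun k => W k ^ 2) m]
    have hW0 : W 0 = 0 := rfl
    have hterm : ∀ k ∈ Finset.range m, W (k + 1) ^ 2 = c m k ^ 2 * x (k + 1) := by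
      intro k _
      show (c m k * Real.sqrt (x (k + 1))) ^ 2 = _
      rw [mul_pow, hsq]
    rw [Finset.sum_congr rfl hterm, hW0]
    unfold G01
    rw [Finset.sum_range_succ]
    have : 0 ≤ c m m ^ 2 * x (m + 1) := by
      have := (hxpos (m + 1)).le
      positivity
    simp only [ne_eq, OfNat.ofNat_ne_zero, not_false_eq_true, zero_pow, add_zero]
    linarith
  -- Cauchy–Schwarz
  have hCS := Finset.sum_mul_sq_le_sq_mul_sq (Finset.range (m + 1)) A (fun k => P k + W k)
  have hAVsum : ∑ k ∈ Finset.range (m + 1), A k * (P k + W k)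
      = G01 x m + 2 * G11 x m := by
    have : ∀ k ∈ Finset.range (m + 1), A k * (P k + W k) = A k * P k + A k * W k := by
      intro k _; ring
    rw [Finset.sum_congr rfl this, Finset.sum_add_distrib, hAP, hAW]
    ring
  have hVsum : ∑ k ∈ Finset.range (m + 1), (P k + W k) ^ 2
      ≤ 2 * G01 x m + 2 * G22 x m + 4 * G12 x m + G02 x m := by
    have hterm : ∀ k ∈ Finset.range (m + 1),
        (P k + W k) ^ 2 = P k ^ 2 + 2 * (P k * W k) + W k ^ 2 := by
      intro k _; ring
    rw [Finset.sum_congr rfl hterm, Finset.sum_add_distrib, Finset.sum_add_distrib,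
      ← Finset.mul_sum, hPW]
    linarith [hP2, hW2]
  have hFnonneg : 0 ≤ Fm x m := by
    unfold Fm
    apply Finset.sum_nonneg
    intro k _
    have := (hxpos k).le
    positivity
  rw [hAVsum, hA2] at hCS
  calc (G01 x m + 2 * G11 x m) ^ 2
      ≤ Fm x m * ∑ k ∈ Finset.range (m + 1), (P k + W k) ^ 2 := hCS
    _ ≤ Fm x m * (2 * G01 x m + 2 * G22 x m + 4 * G12 x m + G02 x m) :=
        mul_le_mul_of_nonneg_left hVsum hFnonneg

end ChooseSqLC

/-- The linear transformation with respect to the triangular array `{C(n,k)^2}` is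
log-convexity preserving: if `x` is a log-convex sequence of nonnegative reals and
`y n = ∑_{k=0}^n C(n,k)^2 * x k`, then `y` is log-convex. -/
theorem choose_sq_transform_log_convexity_preserving (x : ℕ → ℝ)
    (hx_nonneg : ∀ k, 0 ≤ x k)
    (hx_lc : ∀ k : ℕ, 1 ≤ k → x k ^ 2 ≤ x (k - 1) * x (k + 1))
    (y : ℕ → ℝ)
    (hy : ∀ n, y n = ∑ k ∈ Finset.range (n + 1), (Nat.choose n k : ℝ) ^ 2 * x k)
    (n : ℕ) (hn : 1 ≤ n) :
    y n ^ 2 ≤ y (n - 1) * y (n + 1) := by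
  classical
  obtain ⟨m, rfl⟩ : ∃ m, n = m + 1 := ⟨n - 1, by omega⟩
  have hsub : m + 1 - 1 = m := by omega
  rw [hsub]
  have hlc : ∀ k, x (k + 1) ^ 2 ≤ x k * x (k + 2) := by
    intro k
    have := hx_lc (k + 1) (by omega)
    simpa using this
  by_cases hzero : ∃ j, 1 ≤ j ∧ x j = 0
  · -- degenerate case: all x_k = 0 for k ≥ 1, so y is constant
    obtain ⟨j, hj1, hjz⟩ := hzero
    have hup : ∀ i, j ≤ i → x i = 0 := by
      intro i hi
      induction i, hi using Nat.le_induction with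
      | base => exact hjz
      | succ i hi ih =>
        have h := hlc i
        rw [ih] at h
        simp only [zero_mul] at h
        have := sq_nonneg (x (i + 1))
        nlinarith [hx_nonneg (i + 1)]
    have hdownaux : ∀ d k, 1 ≤ k → k + d = j → x k = 0 := by
      intro d
      induction d with
      | zero =>
        intro k _ hkd
        have hkj : k = j := by omega
        rwa [hkj]
      | succ d ih =>
        intro k hk hkd
        have hk1 : x (k + 1) = 0 := ih (k + 1) (by omega) (by omega)
        have h := hx_lc k hk
        rw [hk1] at h
        simp only [mul_zero] at h
        nlinarith [hx_nonneg k, sq_nonneg (x k)]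
    have hallz : ∀ k, 1 ≤ k → x k = 0 := by
      intro k hk
      rcases le_or_gt j k with h | h
      · exact hup k h
      · exact hdownaux (j - k) k hk (by omega)
    have hyconst : ∀ N, y N = x 0 := by
      intro N
      rw [hy N]
      rw [Finset.sum_eq_single 0]
      · simp
      · intro b _ hb
        rw [hallz b (by omega)]
        ring
      · intro h
        exact absurd (Finset.mem_range.mpr (by omega)) h
    rw [hyconst, hyconst, hyconst, sq]
  · -- positive case
    push_neg at hzero
    have hpos1 : ∀ k, 1 ≤ k → 0 < x k := by
      intro k hk
      exact lt_of_le_of_ne (hx_nonneg k) (Ne.symm (hzero k hk))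
    have hx0 : 0 < x 0 := by
      by_contra h
      push_neg at h
      have hx00 : x 0 = 0 := le_antisymm h (hx_nonneg 0)
      have h1 := hlc 0
      rw [hx00] at h1
      simp only [zero_mul] at h1
      have h2 : x 1 = 0 := by nlinarith [hx_nonneg 1, sq_nonneg (x 1)]
      exact (hpos1 1 le_rfl).ne' h2
    have hxpos : ∀ k, 0 < x k := by
      intro k
      cases k with
      | zero => exact hx0
      | succ k => exact hpos1 (k + 1) (by omega)
    -- expansions of y
    have hY0 : y m = ChooseSqLC.Fm x m := by
      rw [hy m]; rfl
    have hY1 : y (m + 1)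
        = ChooseSqLC.Fm x m + 2 * ChooseSqLC.G11 x m + ChooseSqLC.G01 x m := by
      rw [hy (m + 1)]
      exact ChooseSqLC.Y1 x m
    have hY2 : y (m + 2)
        = ChooseSqLC.Fm x m + 4 * ChooseSqLC.G11 x m + 4 * ChooseSqLC.G01 x m
          + 2 * ChooseSqLC.G22 x m + 4 * ChooseSqLC.G12 x m + ChooseSqLC.G02 x m := by
      rw [hy (m + 2)]
      exact ChooseSqLC.Y2 x m
    have hkey := ChooseSqLC.key x hxpos hlc m
    have hFnonneg : 0 ≤ ChooseSqLC.Fm x m := by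
      unfold ChooseSqLC.Fm
      apply Finset.sum_nonneg
      intro k _
      have := hx_nonneg k
      positivity
    rw [hY0, hY1]
    rw [show m + 1 + 1 = m + 2 by rfl, hY2]
    nlinarith [hkey, hFnonneg]
end

section
/- For all integers n ≥ 1 and r ≥ 0, the following identity of integers holds: ∑_{k=0}^r [ C(n+1,k)^2 C(n−1,r−k)^2 − C(n,k)^2 C(n,r−k)^2 ] = 2 ∑_{k=0}^r [ C(n−1,k−1)^2 C(n−1,r−k)^2 + C(n−1,k−2) C(n−1,k) C(n−1,r−k)^2 − 2 C(n−1,k−1) C(n−1,k) C(n−1,r−k−1) C(n−1,r−k) ]. -/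
/-- The binomial coefficient `C(m, j)` for an integer index `j`, with the convention
that it vanishes for `j < 0` (and for `j > m`, as usual). -/
def Cz (m : ℕ) (j : ℤ) : ℤ := if 0 ≤ j then (Nat.choose m j.toNat : ℤ) else 0

lemma Cz_neg (m : ℕ) {j : ℤ} (h : j < 0) : Cz m j = 0 := by
  simp [Cz, not_le.mpr h]

lemma Cz_natCast (m k : ℕ) : Cz m (k : ℤ) = (Nat.choose m k : ℤ) := by
  simp [Cz]

lemma Cz_pascal (m : ℕ) (j : ℤ) : Cz (m + 1) j = Cz m j + Cz m (j - 1) := by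
  rcases lt_trichotomy j 0 with h | h | h
  · rw [Cz_neg _ h, Cz_neg _ h, Cz_neg _ (by omega), add_zero]
  · subst h; simp [Cz]
  · obtain ⟨t, rfl⟩ : ∃ t : ℕ, j = (t : ℤ) + 1 := ⟨(j - 1).toNat, by omega⟩
    have h2 : ((t : ℤ) + 1 - 1) = (t : ℤ) := by ring
    have h1 : ((t : ℤ) + 1) = ((t + 1 : ℕ) : ℤ) := by push_cast; ring
    rw [h2, h1, Cz_natCast, Cz_natCast, Cz_natCast, Nat.choose_succ_succ]
    push_cast; ring

lemma sum_shift (r : ℕ) (f g : ℤ → ℤ) (hf : f (-1) = 0) (hg : g (-1) = 0) :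
    ∑ k ∈ Finset.range (r + 1), f ((k : ℤ) - 1) * g ((r : ℤ) - k) =
    ∑ k ∈ Finset.range (r + 1), f (k : ℤ) * g ((r : ℤ) - k - 1) := by
  rw [Finset.sum_range_succ' _ r, Finset.sum_range_succ _ r]
  rw [show ((0 : ℕ) : ℤ) - 1 = -1 by norm_num, hf,
    show ((r : ℤ) - r - 1) = -1 by ring, hg]
  simp only [zero_mul, mul_zero, add_zero]
  apply Finset.sum_congr rfl
  intro k hk
  have h1 : (((k + 1 : ℕ) : ℤ) - 1) = (k : ℤ) := by push_cast; ring
  have h2 : ((r : ℤ) - ((k + 1 : ℕ) : ℤ)) = (r : ℤ) - k - 1 := by push_cast; ring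
  rw [h1, h2]

/-- The basic convolution-type sums. -/
def Sgen (m r : ℕ) (i j p q : ℤ) : ℤ :=
  ∑ k ∈ Finset.range (r + 1),
    Cz m ((k : ℤ) - i) * Cz m ((k : ℤ) - j) * Cz m ((r : ℤ) - k - p) * Cz m ((r : ℤ) - k - q)

lemma Sgen_refl (m r : ℕ) (i j p q : ℤ) : Sgen m r i j p q = Sgen m r p q i j := by
  unfold Sgen
  rw [← Finset.sum_range_reflect]
  apply Finset.sum_congr rfl
  intro k hk
  have hk' : k ≤ r := by simp only [Finset.mem_range] at hk; omega
  have h1 : ((r + 1 - 1 - k : ℕ) : ℤ) = (r : ℤ) - k := by omega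
  rw [h1]
  have a1 : (r : ℤ) - k - i = (r : ℤ) - k - i := rfl
  have a2 : (r : ℤ) - ((r : ℤ) - k) - p = (k : ℤ) - p := by ring
  have a3 : (r : ℤ) - ((r : ℤ) - k) - q = (k : ℤ) - q := by ring
  rw [a2, a3]; ring

lemma Sgen_shift (m r : ℕ) (i j p q : ℤ) (hi : 0 ≤ i) (hj : 0 ≤ j) (hp : 0 ≤ p) :
    Sgen m r (i + 1) (j + 1) p q = Sgen m r i j (p + 1) (q + 1) := by
  have H := sum_shift r (fun x => Cz m (x - i) * Cz m (x - j))
      (fun x => Cz m (x - p) * Cz m (x - q))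
      (by show Cz m (-1 - i) * Cz m (-1 - j) = 0
          rw [Cz_neg m (show (-1 : ℤ) - i < 0 by omega), zero_mul])
      (by show Cz m (-1 - p) * Cz m (-1 - q) = 0
          rw [Cz_neg m (show (-1 : ℤ) - p < 0 by omega), zero_mul])
  unfold Sgen
  calc ∑ k ∈ Finset.range (r + 1),
        Cz m ((k : ℤ) - (i + 1)) * Cz m ((k : ℤ) - (j + 1)) *
          Cz m ((r : ℤ) - k - p) * Cz m ((r : ℤ) - k - q)
      = ∑ k ∈ Finset.range (r + 1),
        (Cz m (((k : ℤ) - 1) - i) * Cz m (((k : ℤ) - 1) - j)) *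
          (Cz m (((r : ℤ) - k) - p) * Cz m (((r : ℤ) - k) - q)) := by
        apply Finset.sum_congr rfl; intro k _
        rw [show (k : ℤ) - (i + 1) = (k : ℤ) - 1 - i by ring,
          show (k : ℤ) - (j + 1) = (k : ℤ) - 1 - j by ring]; ring
    _ = ∑ k ∈ Finset.range (r + 1),
        (Cz m ((k : ℤ) - i) * Cz m ((k : ℤ) - j)) *
          (Cz m (((r : ℤ) - k - 1) - p) * Cz m (((r : ℤ) - k - 1) - q)) := H
    _ = ∑ k ∈ Finset.range (r + 1),
        Cz m ((k : ℤ) - i) * Cz m ((k : ℤ) - j) *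
          Cz m ((r : ℤ) - k - (p + 1)) * Cz m ((r : ℤ) - k - (q + 1)) := by
        apply Finset.sum_congr rfl; intro k _
        rw [show (r : ℤ) - k - 1 - p = (r : ℤ) - k - (p + 1) by ring,
          show (r : ℤ) - k - 1 - q = (r : ℤ) - k - (q + 1) by ring]; ring

/-- For all `n ≥ 1` and `r ≥ 0`, the coefficient of `q^r` in
`W_{n+1}(q) W_{n-1}(q) - W_n(q)^2` equals twice the stated sum in the
binomial coefficients `C(n-1, ·)`. -/
theorem coeff_identity (n : ℕ) (hn : 1 ≤ n) (r : ℕ) :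
    ∑ k ∈ Finset.range (r + 1),
        ((Nat.choose (n + 1) k : ℤ) ^ 2 * (Nat.choose (n - 1) (r - k) : ℤ) ^ 2 -
          (Nat.choose n k : ℤ) ^ 2 * (Nat.choose n (r - k) : ℤ) ^ 2) =
      2 * ∑ k ∈ Finset.range (r + 1),
        (Cz (n - 1) ((k : ℤ) - 1) ^ 2 * Cz (n - 1) ((r : ℤ) - k) ^ 2 +
          Cz (n - 1) ((k : ℤ) - 2) * Cz (n - 1) (k : ℤ) * Cz (n - 1) ((r : ℤ) - k) ^ 2 -
          2 * Cz (n - 1) ((k : ℤ) - 1) * Cz (n - 1) (k : ℤ) *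
            Cz (n - 1) ((r : ℤ) - k - 1) * Cz (n - 1) ((r : ℤ) - k)) := by
  obtain ⟨m, rfl⟩ : ∃ m, n = m + 1 := ⟨n - 1, by omega⟩
  simp only [Nat.add_sub_cancel]
  have key :
      (∑ k ∈ Finset.range (r + 1),
        ((Nat.choose (m + 1 + 1) k : ℤ) ^ 2 * (Nat.choose m (r - k) : ℤ) ^ 2 -
          (Nat.choose (m + 1) k : ℤ) ^ 2 * (Nat.choose (m + 1) (r - k) : ℤ) ^ 2)) -
      2 * (∑ k ∈ Finset.range (r + 1),
        (Cz m ((k : ℤ) - 1) ^ 2 * Cz m ((r : ℤ) - k) ^ 2 +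
          Cz m ((k : ℤ) - 2) * Cz m (k : ℤ) * Cz m ((r : ℤ) - k) ^ 2 -
          2 * Cz m ((k : ℤ) - 1) * Cz m (k : ℤ) *
            Cz m ((r : ℤ) - k - 1) * Cz m ((r : ℤ) - k))) =
      (Sgen m r 1 1 0 0 - Sgen m r 0 0 1 1) + (Sgen m r 2 2 0 0 - Sgen m r 1 1 1 1) +
        2 * (Sgen m r 0 1 0 0 - Sgen m r 0 0 0 1) +
        2 * (Sgen m r 1 2 0 0 - Sgen m r 0 1 1 1) +
        2 * (Sgen m r 1 2 0 0 - Sgen m r 1 1 0 1) := by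
    simp only [Sgen, Finset.mul_sum, ← Finset.sum_sub_distrib, ← Finset.sum_add_distrib]
    apply Finset.sum_congr rfl
    intro k hk
    have hk' : k ≤ r := by simp only [Finset.mem_range] at hk; omega
    have c1 : (Nat.choose (m + 1 + 1) k : ℤ) =
        Cz m (k : ℤ) + 2 * Cz m ((k : ℤ) - 1) + Cz m ((k : ℤ) - 2) := by
      rw [← Cz_natCast, Cz_pascal, Cz_pascal, Cz_pascal,
        show ((k : ℤ) - 1 - 1) = (k : ℤ) - 2 by ring]; ring
    have c2 : (Nat.choose (m + 1) k : ℤ) = Cz m (k : ℤ) + Cz m ((k : ℤ) - 1) := by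
      rw [← Cz_natCast, Cz_pascal]
    have c3 : (Nat.choose m (r - k) : ℤ) = Cz m ((r : ℤ) - k) := by
      rw [show ((r : ℤ) - k) = ((r - k : ℕ) : ℤ) by omega, Cz_natCast]
    have c4 : (Nat.choose (m + 1) (r - k) : ℤ) =
        Cz m ((r : ℤ) - k) + Cz m ((r : ℤ) - k - 1) := by
      rw [show ((r : ℤ) - k) = ((r - k : ℕ) : ℤ) by omega, ← Cz_pascal, Cz_natCast]
    rw [c1, c2, c3, c4]
    simp only [sub_zero]
    ring
  have E1 : Sgen m r 1 1 0 0 = Sgen m r 0 0 1 1 := by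
    have := Sgen_shift m r 0 0 0 0 le_rfl le_rfl le_rfl; norm_num at this; exact this
  have E2 : Sgen m r 2 2 0 0 = Sgen m r 1 1 1 1 := by
    have := Sgen_shift m r 1 1 0 0 zero_le_one zero_le_one le_rfl; norm_num at this; exact this
  have E3 : Sgen m r 0 1 0 0 = Sgen m r 0 0 0 1 := Sgen_refl m r 0 1 0 0
  have E4a : Sgen m r 1 2 0 0 = Sgen m r 0 1 1 1 := by
    have := Sgen_shift m r 0 1 0 0 le_rfl zero_le_one le_rfl; norm_num at this; exact this
  have E4b : Sgen m r 1 2 0 0 = Sgen m r 1 1 0 1 := by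
    rw [E4a]; exact Sgen_refl m r 0 1 1 1
  linarith [key, E1, E2, E3, E4a, E4b]
end

section
/- Define α(n,r,k) = C(n+1,k)^2 C(n−1,r−k)^2 + C(n+1,r−k)^2 C(n−1,k)^2 − 2 C(n,r−k)^2 C(n,k)^2 as an integer. Then for every integer n ≥ 1 and every integer r with 0 ≤ r ≤ 2n, there exists an integer k' such that for all integers k with 0 ≤ k ≤ ⌊r/2⌋: if k ≤ k' then α(n,r,k) ≥ 0, and if k > k' then α(n,r,k) ≤ 0. -/
/-- `α(n, r, k) = C(n+1,k)^2 C(n-1,r-k)^2 + C(n+1,r-k)^2 C(n-1,k)^2 - 2 C(n,r-k)^2 C(n,k)^2`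
as an integer (here `n ≥ 1` and `0 ≤ k ≤ r`, so all the indices are nonnegative, and the
convention that binomial coefficients vanish above the top index is built into
`Nat.choose`). -/
def alphaW (n r k : ℕ) : ℤ :=
  (Nat.choose (n + 1) k : ℤ) ^ 2 * (Nat.choose (n - 1) (r - k) : ℤ) ^ 2 +
    (Nat.choose (n + 1) (r - k) : ℤ) ^ 2 * (Nat.choose (n - 1) k : ℤ) ^ 2 -
    2 * (Nat.choose n (r - k) : ℤ) ^ 2 * (Nat.choose n k : ℤ) ^ 2


/-- Auxiliary polynomial: `α(n,r,k) * (n(n+1-k))^2 (n(n+1-j))^2 = (C(n,k)C(n,j))^2 * Gpoly n k j`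
where `j = r - k`, in the regime `k ≤ n`, `j ≤ n`. -/
def Gpoly (n k j : ℤ) : ℤ :=
  ((n+1)*(n-j))^2*(n*(n+1-j))^2 + ((n+1)*(n-k))^2*(n*(n+1-k))^2
    - 2*(n*(n+1-k))^2*(n*(n+1-j))^2

set_option maxHeartbeats 1000000 in
lemma Gpoly_step (K T S : ℤ) (hK : 0 ≤ K) (hT : 0 ≤ T) (hS : 0 ≤ S) :
    Gpoly (K+2+T+S) (K+1) (K+1+T) ≤ Gpoly (K+2+T+S) K (K+2+T) := by
  have hpos : (0:ℤ) ≤ 308 + 612*S + 446*S^2 + 140*S^3 + 16*S^4 + 736*T + 1244*T*S + 752*T*S^2 + 188*T*S^3 + 16*T*S^4 + 650*T^2 + 848*T^2*S + 358*T^2*S^2 + 48*T^2*S^3 + 272*T^3 + 240*T^3*S + 52*T^3*S^2 + 54*T^4 + 24*T^4*S + 4*T^5 + 224*K + 364*K*S + 192*K*S^2 + 32*K*S^3 + 452*K*T + 608*K*T*S + 256*K*T*S^2 + 32*K*T*S^3 + 304*K*T^2 + 284*K*T^2*S + 64*K*T^2*S^2 + 84*K*T^3 + 40*K*T^3*S +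 8*K*T^4 + 42*K^2 + 52*K^2*S + 16*K^2*S^2 + 68*K^2*T + 68*K^2*T*S + 16*K^2*T*S^2 + 30*K^2*T^2 + 16*K^2*T^2*S + 4*K^2*T^3 := by positivity
  have key : Gpoly (K+2+T+S) K (K+2+T) - Gpoly (K+2+T+S) (K+1) (K+1+T) =
      (K+2+T+S)^2 * (308 + 612*S + 446*S^2 + 140*S^3 + 16*S^4 + 736*T + 1244*T*S + 752*T*S^2 + 188*T*S^3 + 16*T*S^4 + 650*T^2 + 848*T^2*S + 358*T^2*S^2 + 48*T^2*S^3 + 272*T^3 + 240*T^3*S + 52*T^3*S^2 + 54*T^4 + 24*T^4*S + 4*T^5 + 224*K + 364*K*S + 192*K*S^2 + 32*K*S^3 + 452*K*T + 608*K*T*S + 256*K*T*S^2 + 32*K*T*S^3 + 304*K*T^2 + 284*K*T^2*S + 64*K*T^2*S^2 + 84*K*T^3 + 40*K*T^3*S + 8*K*T^4 + 42*K^2 + 52*K^2*S + 16*K^2*S^2 + 68*K^2*T + 68*K^2*T*S + 16*K^2*T*S^2 + 30*K^2*T^2 + 16*K^2*T^2*S + 4*K^2*T^3) := by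
    simp only [Gpoly]; ring
  have htot := mul_nonneg (sq_nonneg (K+2+T+S)) hpos
  linarith
set_option maxHeartbeats 1000000

lemma Gmono_succ (n r k : ℕ) (h2 : 2*(k+1) ≤ r) (hrn : r - k ≤ n) :
    Gpoly (n:ℤ) ((k:ℤ)+1) ((r:ℤ)-((k:ℤ)+1)) ≤ Gpoly (n:ℤ) (k:ℤ) ((r:ℤ)-(k:ℤ)) := by
  obtain ⟨t, ht⟩ : ∃ t : ℕ, r = 2*k+2+t := ⟨r - (2*k+2), by omega⟩
  obtain ⟨s, hs⟩ : ∃ s : ℕ, n = (r - k) + s := ⟨n - (r-k), by omega⟩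
  have h1 : (n:ℤ) = (k:ℤ)+2+t+s := by omega
  have h2' : (r:ℤ)-((k:ℤ)+1) = (k:ℤ)+1+t := by omega
  have h3 : (r:ℤ)-(k:ℤ) = (k:ℤ)+2+t := by omega
  rw [h1, h2', h3]
  exact Gpoly_step (k:ℤ) (t:ℤ) (s:ℤ) (Int.natCast_nonneg k) (Int.natCast_nonneg t)
    (Int.natCast_nonneg s)

lemma Gmono (n r k1 : ℕ) : ∀ k2 : ℕ, k1 ≤ k2 → 2*k2 ≤ r → r - k1 ≤ n →
    Gpoly (n:ℤ) (k2:ℤ) ((r:ℤ)-(k2:ℤ)) ≤ Gpoly (n:ℤ) (k1:ℤ) ((r:ℤ)-(k1:ℤ)) := by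
  intro k2
  induction k2 with
  | zero =>
    intro h _ _
    have : k1 = 0 := Nat.le_zero.mp h
    subst this; exact le_refl _
  | succ k ih =>
    intro hle h2 hn
    rcases Nat.lt_or_ge k1 (k+1) with hlt | hge
    · have hk1k : k1 ≤ k := by omega
      have step : Gpoly (n:ℤ) ((k:ℤ)+1) ((r:ℤ)-((k:ℤ)+1)) ≤
          Gpoly (n:ℤ) (k:ℤ) ((r:ℤ)-(k:ℤ)) :=
        Gmono_succ n r k h2 (by omega)
      have hcast : ((k+1:ℕ):ℤ) = (k:ℤ)+1 := by push_cast; ring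
      rw [hcast]
      exact le_trans step (ih hk1k (by omega) hn)
    · have : k1 = k+1 := by omega
      subst this; exact le_refl _

lemma alphaW_mul (n r k : ℕ) (hn : 1 ≤ n) (hkr : k ≤ r) (hkn : k ≤ n) (hjn : r - k ≤ n) :
    alphaW n r k * ((n:ℤ)*((n:ℤ)+1-(k:ℤ)))^2 * ((n:ℤ)*((n:ℤ)+1-((r:ℤ)-(k:ℤ))))^2
      = ((n.choose k : ℤ)*(n.choose (r-k) : ℤ))^2 * Gpoly (n:ℤ) (k:ℤ) ((r:ℤ)-(k:ℤ)) := by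
  set j : ℕ := r - k with hjdef
  have hj : (j:ℤ) = (r:ℤ) - (k:ℤ) := by omega
  rw [← hj]
  have c1 : ((n+1).choose k : ℤ) * ((n:ℤ)+1-(k:ℤ)) = (n.choose k : ℤ) * ((n:ℤ)+1) := by
    have h := Nat.choose_mul_succ_eq n k
    zify [show k ≤ n+1 by omega] at h
    linear_combination -h
  have c2 : ((n-1).choose j : ℤ) * (n:ℤ) = (n.choose j : ℤ) * ((n:ℤ)-(j:ℤ)) := by
    have h := Nat.choose_mul_succ_eq (n-1) j
    have hh : n - 1 + 1 = n := by omega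
    rw [hh] at h
    zify [hjn] at h
    linear_combination h
  have c3 : ((n+1).choose j : ℤ) * ((n:ℤ)+1-(j:ℤ)) = (n.choose j : ℤ) * ((n:ℤ)+1) := by
    have h := Nat.choose_mul_succ_eq n j
    zify [show j ≤ n+1 by omega] at h
    linear_combination -h
  have c4 : ((n-1).choose k : ℤ) * (n:ℤ) = (n.choose k : ℤ) * ((n:ℤ)-(k:ℤ)) := by
    have h := Nat.choose_mul_succ_eq (n-1) k
    have hh : n - 1 + 1 = n := by omega
    rw [hh] at h
    zify [hkn] at h
    linear_combination h
  have e1 : (((n+1).choose k : ℤ) * ((n:ℤ)+1-(k:ℤ)) * (((n-1).choose j : ℤ) * (n:ℤ)))^2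
      = ((n.choose k : ℤ) * ((n:ℤ)+1) * ((n.choose j : ℤ) * ((n:ℤ)-(j:ℤ))))^2 := by
    rw [c1, c2]
  have e2 : (((n+1).choose j : ℤ) * ((n:ℤ)+1-(j:ℤ)) * (((n-1).choose k : ℤ) * (n:ℤ)))^2
      = ((n.choose j : ℤ) * ((n:ℤ)+1) * ((n.choose k : ℤ) * ((n:ℤ)-(k:ℤ))))^2 := by
    rw [c3, c4]
  simp only [alphaW, Gpoly, ← hjdef]
  linear_combination ((n:ℤ)*((n:ℤ)+1-(j:ℤ)))^2 * e1 + ((n:ℤ)*((n:ℤ)+1-(k:ℤ)))^2 * e2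

lemma alphaW_key (n r k1 k2 : ℕ) (hn : 1 ≤ n) (hr : r ≤ 2*n) (h12 : k1 < k2)
    (h2 : 2*k2 ≤ r) (hpos : 0 < alphaW n r k2) : 0 ≤ alphaW n r k1 := by
  by_cases hcase : n < r - k1
  · have hz1 : Nat.choose n (r - k1) = 0 := Nat.choose_eq_zero_of_lt hcase
    have hz2 : Nat.choose (n-1) (r - k1) = 0 := Nat.choose_eq_zero_of_lt (by omega)
    simp only [alphaW, hz1, hz2, Nat.cast_zero]
    ring_nf
    positivity
  · push_neg at hcase
    have hk2n : k2 ≤ n := by omega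
    have hk2r : k2 ≤ r := by omega
    have hj2 : r - k2 ≤ n := by omega
    have hk1r : k1 ≤ r := by omega
    have hk1n : k1 ≤ n := by omega
    have id2 := alphaW_mul n r k2 hn hk2r hk2n hj2
    have id1 := alphaW_mul n r k1 hn hk1r hk1n hcase
    have d1pos2 : (0:ℤ) < (n:ℤ)*((n:ℤ)+1-(k2:ℤ)) := by
      have : (0:ℤ) < (n:ℤ) := by exact_mod_cast hn
      have : (0:ℤ) < (n:ℤ)+1-(k2:ℤ) := by omega
      positivity
    have d2pos2 : (0:ℤ) < (n:ℤ)*((n:ℤ)+1-((r:ℤ)-(k2:ℤ))) := by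
      have h1 : (0:ℤ) < (n:ℤ) := by exact_mod_cast hn
      have h2 : (0:ℤ) < (n:ℤ)+1-((r:ℤ)-(k2:ℤ)) := by omega
      positivity
    have hG2 : 0 < Gpoly (n:ℤ) (k2:ℤ) ((r:ℤ)-(k2:ℤ)) := by
      by_contra h
      push_neg at h
      have hXG : ((n.choose k2 : ℤ)*(n.choose (r-k2) : ℤ))^2 *
          Gpoly (n:ℤ) (k2:ℤ) ((r:ℤ)-(k2:ℤ)) ≤ 0 :=
        mul_nonpos_of_nonneg_of_nonpos (sq_nonneg _) h
      rw [← id2] at hXG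
      nlinarith [mul_pos (mul_pos hpos (pow_pos d1pos2 2)) (pow_pos d2pos2 2)]
    have hmono := Gmono n r k1 k2 (le_of_lt h12) h2 hcase
    have hG1 : 0 < Gpoly (n:ℤ) (k1:ℤ) ((r:ℤ)-(k1:ℤ)) := lt_of_lt_of_le hG2 hmono
    have d1pos1 : (0:ℤ) < (n:ℤ)*((n:ℤ)+1-(k1:ℤ)) := by
      have h1 : (0:ℤ) < (n:ℤ) := by exact_mod_cast hn
      have h2 : (0:ℤ) < (n:ℤ)+1-(k1:ℤ) := by omega
      positivity
    have d2pos1 : (0:ℤ) < (n:ℤ)*((n:ℤ)+1-((r:ℤ)-(k1:ℤ))) := by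
      have h1 : (0:ℤ) < (n:ℤ) := by exact_mod_cast hn
      have h2 : (0:ℤ) < (n:ℤ)+1-((r:ℤ)-(k1:ℤ)) := by omega
      positivity
    have hXG : 0 ≤ ((n.choose k1 : ℤ)*(n.choose (r-k1) : ℤ))^2 *
        Gpoly (n:ℤ) (k1:ℤ) ((r:ℤ)-(k1:ℤ)) :=
      mul_nonneg (sq_nonneg _) hG1.le
    rw [← id1] at hXG
    by_contra hneg
    push_neg at hneg
    nlinarith [mul_pos (mul_pos (neg_pos.mpr hneg) (pow_pos d1pos1 2)) (pow_pos d2pos1 2)]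

/-- Liu and Wang's sign condition for the triangular array `{C(n,k)^2}`:
for every `n ≥ 1` and `0 ≤ r ≤ 2n` there is an integer `k'` such that for all
`0 ≤ k ≤ ⌊r/2⌋` one has `α(n,r,k) ≥ 0` when `k ≤ k'` and `α(n,r,k) ≤ 0` when `k > k'`. -/
theorem alphaW_sign_change (n : ℕ) (hn : 1 ≤ n) (r : ℕ) (hr : r ≤ 2 * n) :
    ∃ k' : ℤ, ∀ k : ℕ, k ≤ r / 2 →
      ((k : ℤ) ≤ k' → 0 ≤ alphaW n r k) ∧ (k' < (k : ℤ) → alphaW n r k ≤ 0) := by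
  classical
  by_cases hne : ((Finset.range (r/2+1)).filter (fun k => 0 < alphaW n r k)).Nonempty
  · refine ⟨((((Finset.range (r/2+1)).filter (fun k => 0 < alphaW n r k)).max' hne : ℕ) : ℤ), ?_⟩
    intro k hk
    have hm := Finset.max'_mem _ hne
    rw [Finset.mem_filter, Finset.mem_range] at hm
    constructor
    · intro hle
      have hkm : k ≤ ((Finset.range (r/2+1)).filter (fun k => 0 < alphaW n r k)).max' hne := by
        exact_mod_cast hle
      rcases eq_or_lt_of_le hkm with he | hlt
      · rw [he]; exact hm.2.le
      · exact alphaW_key n r k _ hn hr hlt (by omega) hm.2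
    · intro hgt
      by_contra hneg
      push_neg at hneg
      have hkS : k ∈ (Finset.range (r/2+1)).filter (fun k => 0 < alphaW n r k) := by
        rw [Finset.mem_filter, Finset.mem_range]
        exact ⟨by omega, hneg⟩
      have hle := Finset.le_max' _ k hkS
      have : (k:ℤ) ≤ (((Finset.range (r/2+1)).filter (fun k => 0 < alphaW n r k)).max' hne : ℤ) := by
        exact_mod_cast hle
      linarith
  · refine ⟨-1, ?_⟩
    intro k hk
    constructor
    · intro hle
      exfalso
      have : (0:ℤ) ≤ (k:ℤ) := Int.natCast_nonneg k
      linarith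
    · intro _
      by_contra h
      push_neg at h
      exact hne ⟨k, by rw [Finset.mem_filter, Finset.mem_range]; exact ⟨by omega, h⟩⟩
end

section
/- Fix an integer n ≥ 1 and a real number r, and define the real polynomial function f(x) = (n+1)^2 (n−x+1)^2 (n−x)^2 + (n+1)^2 (n−(r−x)+1)^2 (n−(r−x))^2 − 2 n^2 (n−x+1)^2 (n−(r−x)+1)^2. Then for all real numbers x, y with x ≤ y ≤ r/2, one has f(y) ≤ max(f(x), f(r/2)). In particular, there is at most one sign change from nonnegative to nonpositive of f along any increasing sequence of points in (−∞, r/2]. -/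
/-- Quasiconvexity on `(-∞, r/2]` of the polynomial
`f(x) = (n+1)^2 (n-x+1)^2 (n-x)^2 + (n+1)^2 (n-(r-x)+1)^2 (n-(r-x))^2
        - 2 n^2 (n-x+1)^2 (n-(r-x)+1)^2`
(for an integer `n ≥ 1` and a real number `r`): for all reals `x ≤ y ≤ r/2`,
`f(y) ≤ max (f x) (f (r/2))`. -/
theorem f_quasiconvex_on_left_half (n : ℤ) (hn : 1 ≤ n) (r : ℝ) (f : ℝ → ℝ)
    (hf : ∀ x : ℝ, f x =
      ((n : ℝ) + 1) ^ 2 * ((n : ℝ) - x + 1) ^ 2 * ((n : ℝ) - x) ^ 2 +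
        ((n : ℝ) + 1) ^ 2 * ((n : ℝ) - (r - x) + 1) ^ 2 * ((n : ℝ) - (r - x)) ^ 2 -
        2 * (n : ℝ) ^ 2 * ((n : ℝ) - x + 1) ^ 2 * ((n : ℝ) - (r - x) + 1) ^ 2)
    (x y : ℝ) (hxy : x ≤ y) (hy : y ≤ r / 2) :
    f y ≤ max (f x) (f (r / 2)) := by
  have hN : (1 : ℝ) ≤ (n : ℝ) := by exact_mod_cast hn
  set N : ℝ := (n : ℝ)
  -- the second factor of f'
  set g : ℝ → ℝ := fun t =>
    (4 * N + 2) * t ^ 2 - (4 * N + 2) * r * t +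
      (1 + 8 * N + 21 * N ^ 2 + 22 * N ^ 3 + 8 * N ^ 4
        - 3 * r - 12 * N * r - 17 * N ^ 2 * r - 8 * N ^ 3 * r
        + 2 * r ^ 2 + 4 * N * r ^ 2 + 2 * N ^ 2 * r ^ 2) with hg
  have hfun : f = fun u : ℝ =>
      (N + 1) ^ 2 * (N - u + 1) ^ 2 * (N - u) ^ 2 +
        (N + 1) ^ 2 * (N - (r - u) + 1) ^ 2 * (N - (r - u)) ^ 2 -
        2 * N ^ 2 * (N - u + 1) ^ 2 * (N - (r - u) + 1) ^ 2 := funext hf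
  have hF : ∀ t : ℝ, HasDerivAt f (2 * (2 * t - r) * g t) t := by
    intro t
    rw [hfun]
    have h1 : HasDerivAt (fun u : ℝ => N - u + 1) (-1) t := by
      simpa using (((hasDerivAt_id t).const_sub N).add_const 1)
    have h2 : HasDerivAt (fun u : ℝ => N - u) (-1) t := by
      simpa using ((hasDerivAt_id t).const_sub N)
    have h3 : HasDerivAt (fun u : ℝ => N - (r - u) + 1) 1 t := by
      simpa using ((((hasDerivAt_id t).const_sub r).const_sub N).add_const 1)
    have h4 : HasDerivAt (fun u : ℝ => N - (r - u)) 1 t := by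
      simpa using (((hasDerivAt_id t).const_sub r).const_sub N)
    have H := ((((h1.pow 2).mul (h2.pow 2)).const_mul ((N + 1) ^ 2)).add
        (((h3.pow 2).mul (h4.pow 2)).const_mul ((N + 1) ^ 2))).sub
        (((h1.pow 2).mul (h3.pow 2)).const_mul (2 * N ^ 2))
    refine (H.congr_deriv ?_).congr_of_eventuallyEq (Filter.Eventually.of_forall fun u => ?_)
    · simp only [hg, Pi.pow_apply]; push_cast; ring
    · simp only [Pi.add_apply, Pi.sub_apply, Pi.mul_apply, Pi.pow_apply]; ring
  have hcont : Continuous f := by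
    rw [continuous_iff_continuousAt]; exact fun t => (hF t).continuousAt
  rcases le_or_gt (f y) (f x) with h | h
  · exact le_max_of_le_left h
  rcases eq_or_lt_of_le hy with hyr | hyr
  · rw [hyr]; exact le_max_right _ _
  -- f x < f y, so by MVT there is c ∈ (x, y) with g c < 0
  have hxy' : x < y :=
    hxy.lt_of_ne (fun h' => absurd h (by rw [h']; exact lt_irrefl _))
  obtain ⟨c, hc, hceq⟩ := exists_hasDerivAt_eq_slope f (fun t => 2 * (2 * t - r) * g t)
    hxy' hcont.continuousOn (fun t _ => hF t)
  have hslope : 0 < 2 * (2 * c - r) * g c := by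
    rw [hceq]
    apply div_pos (by linarith) (by linarith)
  have hcr : 2 * c - r < 0 := by
    have : c < y := hc.2
    linarith
  have hgc : g c < 0 := by nlinarith [hslope, hcr]
  -- g is decreasing on (-∞, r/2], so g ≤ g c < 0 on [y, r/2], hence f' ≥ 0 there
  have mono : MonotoneOn f (Set.Icc y (r / 2)) := by
    apply monotoneOn_of_deriv_nonneg (convex_Icc _ _) hcont.continuousOn
    · exact fun t _ => (hF t).differentiableAt.differentiableWithinAt
    · intro t ht
      rw [interior_Icc] at ht
      rw [(hF t).deriv]
      have htc : c < t := lt_of_lt_of_le hc.2 (le_of_lt ht.1)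
      have htr : t < r / 2 := ht.2
      have hgt : g t ≤ g c := by
        simp only [hg]
        nlinarith [mul_nonneg (sub_nonneg.2 (le_of_lt htc)) (by linarith : (0:ℝ) ≤ r - c - t)]
      nlinarith [hgt, hgc]
  have : f y ≤ f (r / 2) :=
    mono (Set.mem_Icc.2 ⟨le_refl y, hy⟩) (Set.mem_Icc.2 ⟨hy, le_refl _⟩) hy
  exact le_max_of_le_right this
end
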